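/- arXiv:1711.01560 — 8 statements merged into one kernel-verified Lean document; each statement's English description precedes it below -/
import Mathlib

section
/- Let H=(V,E,w) be a directed hypergraph with weighted-degree vertex weights ω, and suppose ω_u > 0 for every u ∈ V. Then for every nonempty proper subset S ⊂ V with ω(S) ≤ ω(V)/2, we have γ₂ ≤ 2·φ(S). In particular, γ₂/2 ≤ φ_H, where φ_H := min{ φ(S) : ∅ ≠ S ⊂ V, ω(S) ≤ ω(V)/2 }. -/
open Finset
open scoped Classical

noncomputable section

structure DirHyp (V E : Type) [Fintype V] [Fintype E] where
  Tl : E → Finset V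
  Hd : E → Finset V
  w : E → ℝ
  Tl_ne : ∀ e, (Tl e).Nonempty
  Hd_ne : ∀ e, (Hd e).Nonempty
  w_nonneg : ∀ e, 0 ≤ w e

variable {V E : Type} [Fintype V] [DecidableEq V] [Fintype E]

/-- Discrepancy of edge `e` w.r.t. density `f`. -/
def disc (G : DirHyp V E) (f : V → ℝ) (e : E) : ℝ :=
  (G.Tl e).sup' (G.Tl_ne e) f - (G.Hd e).inf' (G.Hd_ne e) f

/-- Weighted degree of vertex `u`. -/
def vw (G : DirHyp V E) (u : V) : ℝ :=
  ∑ e : E, if u ∈ G.Tl e ∪ G.Hd e then G.w e else 0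

/-- Total weight of a vertex subset. -/
def wS (G : DirHyp V E) (S : Finset V) : ℝ := ∑ u ∈ S, vw G u

/-- Discrepancy ratio. -/
def discRatio (G : DirHyp V E) (f : V → ℝ) : ℝ :=
  (∑ e : E, G.w e * (max (disc G f e) 0) ^ 2) / (∑ u : V, vw G u * (f u) ^ 2)

/-- `γ₂`. -/
def gamma2 (G : DirHyp V E) : ℝ :=
  sInf {x : ℝ | ∃ f : V → ℝ, f ≠ 0 ∧ (∑ u : V, vw G u * f u) = 0 ∧ x = discRatio G f}

def outCut (G : DirHyp V E) (S : Finset V) : Finset E :=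
  Finset.univ.filter fun e => (G.Tl e ∩ S).Nonempty ∧ (G.Hd e ∩ Sᶜ).Nonempty

def inCut (G : DirHyp V E) (S : Finset V) : Finset E :=
  Finset.univ.filter fun e => (G.Tl e ∩ Sᶜ).Nonempty ∧ (G.Hd e ∩ S).Nonempty

def phiPlus (G : DirHyp V E) (S : Finset V) : ℝ := (∑ e ∈ outCut G S, G.w e) / wS G S

def phiMinus (G : DirHyp V E) (S : Finset V) : ℝ := (∑ e ∈ inCut G S, G.w e) / wS G S

def phi (G : DirHyp V E) (S : Finset V) : ℝ := min (phiPlus G S) (phiMinus G S)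

/-!
The test vector `f = ω(Sᶜ)·1_S − ω(S)·1_{Sᶜ}` is ω-orthogonal to the constants. Its positive
discrepancy is `ω(S) + ω(Sᶜ) = ω(V)` on the edges of `∂⁺(S)` and `0` elsewhere, so
`D(f) = ω(V)·w(∂⁺S) / (ω(S)·ω(Sᶜ)) ≤ 2 φ⁺(S)` as soon as `ω(S) ≤ ω(Sᶜ)`. Since `−f` is the test
vector of `Sᶜ` and `∂⁺(Sᶜ) = ∂⁻(S)`, the same computation bounds `γ₂` by `2 φ⁻(S)`.
-/

namespace DirHyp

variable (G : DirHyp V E)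

lemma vw_nonneg (u : V) : 0 ≤ vw G u :=
  Finset.sum_nonneg fun e _ => by split_ifs <;> simp [G.w_nonneg e]

lemma wS_nonneg (S : Finset V) : 0 ≤ wS G S :=
  Finset.sum_nonneg fun u _ => G.vw_nonneg u

lemma wS_pos (hpos : ∀ u, 0 < vw G u) {S : Finset V} (hS : S.Nonempty) : 0 < wS G S :=
  Finset.sum_pos (fun u _ => hpos u) hS

lemma wS_add_wS_compl (S : Finset V) : wS G S + wS G Sᶜ = wS G Finset.univ :=
  Finset.sum_add_sum_compl S _

lemma outCut_compl (S : Finset V) : outCut G Sᶜ = inCut G S := by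
  simp only [outCut, inCut, compl_compl]

lemma gamma2_le_discRatio {f : V → ℝ} (hf : f ≠ 0) (hmean : ∑ u, vw G u * f u = 0) :
    gamma2 G ≤ discRatio G f := by
  refine csInf_le ⟨0, ?_⟩ ⟨f, hf, hmean, rfl⟩
  rintro x ⟨g, -, -, rfl⟩
  exact div_nonneg (Finset.sum_nonneg fun e _ => mul_nonneg (G.w_nonneg e) (sq_nonneg _))
    (Finset.sum_nonneg fun u _ => mul_nonneg (G.vw_nonneg u) (sq_nonneg _))

lemma max_disc_ite_mem {a b : ℝ} (hba : b ≤ a) (S : Finset V) (e : E) :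
    max (disc G (fun u => if u ∈ S then a else b) e) 0
      = if e ∈ outCut G S then a - b else 0 := by
  set f : V → ℝ := fun u => if u ∈ S then a else b
  have hf_le (u : V) : f u ≤ a := by simp only [f]; split_ifs <;> linarith
  have hf_ge (u : V) : b ≤ f u := by simp only [f]; split_ifs <;> linarith
  have hsup : (G.Tl e).sup' (G.Tl_ne e) f ≤ a := Finset.sup'_le _ _ fun u _ => hf_le u
  have hinf : b ≤ (G.Hd e).inf' (G.Hd_ne e) f := Finset.le_inf' _ _ fun u _ => hf_ge u
  simp only [outCut, Finset.mem_filter, Finset.mem_univ, true_and, disc]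
  split_ifs with hcut
  · obtain ⟨⟨u, hu⟩, ⟨v, hv⟩⟩ := hcut
    rw [Finset.mem_inter] at hu hv
    have hsup' : a ≤ (G.Tl e).sup' (G.Tl_ne e) f :=
      Finset.le_sup'_of_le f hu.1 (by simp [f, hu.2])
    have hinf' : (G.Hd e).inf' (G.Hd_ne e) f ≤ b :=
      Finset.inf'_le_of_le f hv.1 (by simp [f, Finset.mem_compl.1 hv.2])
    rw [max_eq_left] <;> linarith
  · refine max_eq_right ?_
    simp only [not_and_or, Finset.not_nonempty_iff_eq_empty,
      ← Finset.disjoint_iff_inter_eq_empty, disjoint_compl_right_iff] at hcut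
    rcases hcut with hT | hH
    · have : (G.Tl e).sup' (G.Tl_ne e) f ≤ b := Finset.sup'_le _ _ fun u hu => by
        simp [f, Finset.disjoint_left.1 hT hu]
      linarith
    · have : a ≤ (G.Hd e).inf' (G.Hd_ne e) f := Finset.le_inf' _ _ fun u hu => by
        simp [f, hH hu]
      linarith

def testVec (S : Finset V) (u : V) : ℝ := if u ∈ S then wS G Sᶜ else -wS G S

lemma sum_vw_mul_testVec (g : ℝ → ℝ) (S : Finset V) :
    ∑ u, vw G u * g (testVec G S u) = wS G S * g (wS G Sᶜ) + wS G Sᶜ * g (-wS G S) := by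
  rw [← Finset.sum_add_sum_compl S]
  congr 1
  · calc ∑ u ∈ S, vw G u * g (testVec G S u) = ∑ u ∈ S, vw G u * g (wS G Sᶜ) :=
          Finset.sum_congr rfl fun u hu => by rw [testVec, if_pos hu]
      _ = wS G S * g (wS G Sᶜ) := (Finset.sum_mul _ _ _).symm
  · calc ∑ u ∈ Sᶜ, vw G u * g (testVec G S u) = ∑ u ∈ Sᶜ, vw G u * g (-wS G S) :=
          Finset.sum_congr rfl fun u hu => by rw [testVec, if_neg (Finset.mem_compl.1 hu)]
      _ = wS G Sᶜ * g (-wS G S) := (Finset.sum_mul _ _ _).symm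

lemma testVec_ne_zero {S : Finset V} (hS : S.Nonempty) (hSc : 0 < wS G Sᶜ) :
    testVec G S ≠ 0 := by
  obtain ⟨u, hu⟩ := hS
  intro h
  have := congrFun h u
  simp only [testVec, hu, if_true, Pi.zero_apply] at this
  exact hSc.ne' this

lemma discRatio_testVec (S : Finset V) :
    discRatio G (testVec G S)
      = (wS G S + wS G Sᶜ) * (∑ e ∈ outCut G S, G.w e) / (wS G S * wS G Sᶜ) := by
  have hba : -wS G S ≤ wS G Sᶜ := by linarith [G.wS_nonneg S, G.wS_nonneg Sᶜ]
  have hnum : ∑ e, G.w e * max (disc G (testVec G S) e) 0 ^ 2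
      = (wS G S + wS G Sᶜ) ^ 2 * ∑ e ∈ outCut G S, G.w e := by
    rw [Finset.mul_sum, ← Fintype.sum_ite_mem (outCut G S)]
    refine Finset.sum_congr rfl fun e _ => ?_
    unfold testVec
    rw [max_disc_ite_mem G hba]
    split_ifs <;> ring
  have hden : ∑ u, vw G u * testVec G S u ^ 2 = (wS G S * wS G Sᶜ) * (wS G S + wS G Sᶜ) := by
    rw [G.sum_vw_mul_testVec (· ^ 2)]
    ring
  rw [discRatio, hnum, hden, mul_comm (wS G S * wS G Sᶜ), pow_two, mul_assoc]
  by_cases hV : wS G S + wS G Sᶜ = 0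
  · simp [hV]
  · exact mul_div_mul_left _ _ hV

lemma gamma2_le_testVec {S : Finset V} (hS : S.Nonempty) (hSc : 0 < wS G Sᶜ) :
    gamma2 G ≤ (wS G S + wS G Sᶜ) * (∑ e ∈ outCut G S, G.w e) / (wS G S * wS G Sᶜ) := by
  rw [← discRatio_testVec]
  exact G.gamma2_le_discRatio (G.testVec_ne_zero hS hSc)
    ((G.sum_vw_mul_testVec id S).trans (by simp only [id]; ring))

end DirHyp

lemma add_mul_div_mul_le_two_mul_div {s t c : ℝ} (hs : 0 < s) (hst : s ≤ t) (hc : 0 ≤ c) :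
    (s + t) * c / (s * t) ≤ 2 * (c / s) := by
  have ht : 0 < t := hs.trans_le hst
  calc (s + t) * c / (s * t) = (s + t) / t * (c / s) := by field_simp
    _ ≤ 2 * (c / s) :=
      mul_le_mul_of_nonneg_right (by rw [div_le_iff₀ ht]; linarith) (div_nonneg hc hs.le)

/-- Cheeger lower bound, per-set form.
For every nonempty proper `S ⊂ V` with `ω(S) ≤ ω(V)/2` we have `γ₂ ≤ 2 φ(S)`;
in particular `γ₂ / 2 ≤ φ_H`. -/
theorem cheeger_lower_bound (G : DirHyp V E) (hpos : ∀ u : V, 0 < vw G u)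
    (S : Finset V) (hne : S.Nonempty) (hproper : S ≠ Finset.univ)
    (hhalf : wS G S ≤ wS G Finset.univ / 2) :
    gamma2 G ≤ 2 * phi G S := by
  have hSc : Sᶜ.Nonempty :=
    Finset.nonempty_iff_ne_empty.2 (by rwa [Ne, Finset.compl_eq_empty_iff])
  have hs := G.wS_pos hpos hne
  have ht := G.wS_pos hpos hSc
  have hst : wS G S ≤ wS G Sᶜ := by linarith [G.wS_add_wS_compl S]
  have hcut (F : Finset E) : 0 ≤ ∑ e ∈ F, G.w e := Finset.sum_nonneg fun e _ => G.w_nonneg e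
  rw [phi, mul_min_of_nonneg _ _ zero_le_two]
  refine le_min ?_ ?_
  · calc gamma2 G ≤ _ := G.gamma2_le_testVec hne ht
      _ ≤ _ := add_mul_div_mul_le_two_mul_div hs hst (hcut _)
  · have h := G.gamma2_le_testVec hSc (by rwa [compl_compl])
    rw [compl_compl, G.outCut_compl, add_comm, mul_comm (wS G Sᶜ)] at h
    exact h.trans (add_mul_div_mul_le_two_mul_div hs hst (hcut _))
end
end

section
/- Let H=(V,E,w) be a directed hypergraph, let ω assign a positive weight ω_u > 0 to each vertex u, let f ∈ ℝ^V, and let A ∈ ℝ^{V×V} be any valid splitting for f (with row sums ω). Then fᵀ(W − A)f = Σ_{e∈E : Δ_e(f)>0} w_e · Δ_e(f)² = 2·Q(f). Consequently, if f ≠ 0, the Rayleigh quotient fᵀ(W − A)f / fᵀWf equals the discrepancy ratio (Σ_{e∈E} w_e ([Δ_e(f)]⁺)²) / (Σ_{u∈V} ω_u f_u²). -/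
open Finset Matrix
open scoped Classical

noncomputable section

variable {V E : Type} [Fintype V] [DecidableEq V] [Fintype E]

/-- The quadratic form `Q(f) = (1/2) Σ_e w_e ([Δ_e(f)]⁺)²`. -/
def Qform (G : DirHyp V E) (f : V → ℝ) : ℝ :=
  (1 / 2) * ∑ e : E, G.w e * (max (disc G f e) 0) ^ 2

/-- `S_e(f)`: the vertices of the tail attaining the maximum density. -/
def Se (G : DirHyp V E) (f : V → ℝ) (e : E) : Finset V :=
  (G.Tl e).filter fun u => f u = (G.Tl e).sup' (G.Tl_ne e) f

/-- `I_e(f)`: the vertices of the head attaining the minimum density. -/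
def Ie (G : DirHyp V E) (f : V → ℝ) (e : E) : Finset V :=
  (G.Hd e).filter fun v => f v = (G.Hd e).inf' (G.Hd_ne e) f

/-- A valid splitting of the edge weights for density `f` with vertex weights `ω`:
a symmetric matrix obtained by distributing each active edge's weight over
`S_e(f) × I_e(f)`, with row sums `ω`. -/
def ValidSplitting (G : DirHyp V E) (ω : V → ℝ) (f : V → ℝ) (A : Matrix V V ℝ) : Prop :=
  A.IsSymm ∧
  ∃ a : E → V → V → ℝ,
    (∀ e u v, 0 ≤ a e u v) ∧
    (∀ e u v, a e u v ≠ 0 → 0 < disc G f e ∧ u ∈ Se G f e ∧ v ∈ Ie G f e) ∧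
    (∀ e, 0 < disc G f e → ∑ u ∈ Se G f e, ∑ v ∈ Ie G f e, a e u v = G.w e) ∧
    (∀ u v, u ≠ v → A u v = ∑ e : E, (a e u v + a e v u)) ∧
    (∀ u, ∑ v : V, A u v = ω u)

/-- for any valid splitting `A` for `f`,
`fᵀ(W - A)f = Σ_{e active} w_e Δ_e(f)² = 2 Q(f)`; consequently for `f ≠ 0` the
Rayleigh quotient equals the discrepancy ratio. -/
theorem quadratic_form_eq_rayleigh (G : DirHyp V E) (ω : V → ℝ) (hω : ∀ u, 0 < ω u)
    (f : V → ℝ) (A : Matrix V V ℝ) (hA : ValidSplitting G ω f A) :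
    (f ⬝ᵥ ((Matrix.diagonal ω - A) *ᵥ f)
        = ∑ e ∈ Finset.univ.filter (fun e : E => 0 < disc G f e),
            G.w e * (disc G f e) ^ 2) ∧
    (f ⬝ᵥ ((Matrix.diagonal ω - A) *ᵥ f) = 2 * Qform G f) ∧
    (f ≠ 0 →
      f ⬝ᵥ ((Matrix.diagonal ω - A) *ᵥ f) / (f ⬝ᵥ (Matrix.diagonal ω *ᵥ f))
        = (∑ e : E, G.w e * (max (disc G f e) 0) ^ 2) / (∑ u : V, ω u * (f u) ^ 2)) := by
  obtain ⟨hsym, a, ha0, hsupp, hsum, hoff, hrow⟩ := hA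
  have hAsymm : ∀ u v, A u v = A v u := by
    intro u v
    rw [Matrix.IsSymm] at hsym
    conv_lhs => rw [← hsym]
    rfl
  have hAuv : ∀ e u v, a e u v ≠ 0 → f u - f v = disc G f e := by
    intro e u v h
    obtain ⟨hd, hu, hv⟩ := hsupp e u v h
    simp only [Se, Ie, Finset.mem_filter] at hu hv
    rw [disc, ← hu.2, ← hv.2]
  -- per-edge sum
  have hedge : ∀ e : E, ∑ u : V, ∑ v : V, a e u v * (f u - f v) ^ 2
      = if 0 < disc G f e then G.w e * (disc G f e) ^ 2 else 0 := by
    intro e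
    by_cases hd : 0 < disc G f e
    · simp only [hd, if_true]
      have h2 : (∑ u : V, ∑ v : V, a e u v) = G.w e := by
        rw [← hsum e hd]
        rw [← Finset.sum_subset (Finset.subset_univ (Se G f e))]
        · apply Finset.sum_congr rfl
          intro u _
          rw [← Finset.sum_subset (Finset.subset_univ (Ie G f e))]
          intro v _ hv
          by_contra h
          exact hv (hsupp e u v h).2.2
        · intro u _ hu
          apply Finset.sum_eq_zero
          intro v _
          by_contra h
          exact hu (hsupp e u v h).2.1
      calc ∑ u : V, ∑ v : V, a e u v * (f u - f v) ^ 2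
          = ∑ u : V, ∑ v : V, a e u v * (disc G f e) ^ 2 := by
            apply Finset.sum_congr rfl; intro u _
            apply Finset.sum_congr rfl; intro v _
            by_cases h : a e u v = 0
            · simp [h]
            · rw [hAuv e u v h]
        _ = (∑ u : V, ∑ v : V, a e u v) * (disc G f e) ^ 2 := by
            rw [Finset.sum_mul]
            apply Finset.sum_congr rfl; intro u _
            rw [Finset.sum_mul]
        _ = G.w e * (disc G f e) ^ 2 := by rw [h2]
    · simp only [hd, if_false]
      have hz : ∀ u v, a e u v = 0 := by
        intro u v
        by_contra h
        exact hd (hsupp e u v h).1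
      apply Finset.sum_eq_zero; intro u _
      apply Finset.sum_eq_zero; intro v _
      simp [hz u v]
  set X := f ⬝ᵥ ((Matrix.diagonal ω - A) *ᵥ f) with hX
  have hX1 : X = ∑ u : V, ∑ v : V, A u v * (f u ^ 2 - f u * f v) := by
    rw [hX]
    simp only [dotProduct, Matrix.mulVec, dotProduct, Matrix.sub_apply,
      Matrix.diagonal_apply]
    apply Finset.sum_congr rfl
    intro u _
    rw [Finset.mul_sum]
    have hsplit : ∀ v : V, f u * (((if u = v then ω u else 0) - A u v) * f v)
        = (if u = v then ω u * f u * f v else 0) - A u v * (f u * f v) := by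
      intro v
      by_cases h : u = v <;> simp [h] <;> ring
    simp only [hsplit]
    rw [Finset.sum_sub_distrib]
    rw [Finset.sum_ite_eq Finset.univ u (fun v => ω u * f u * f v)]
    simp only [Finset.mem_univ, if_true]
    rw [← hrow u, Finset.sum_mul, Finset.sum_mul]
    rw [← Finset.sum_sub_distrib]
    apply Finset.sum_congr rfl
    intro v _
    ring
  have hX2 : X = (1 / 2) * ∑ u : V, ∑ v : V, A u v * (f u - f v) ^ 2 := by
    have hswap : X = ∑ u : V, ∑ v : V, A u v * (f v ^ 2 - f u * f v) := by
      rw [hX1, Finset.sum_comm]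
      apply Finset.sum_congr rfl; intro u _
      apply Finset.sum_congr rfl; intro v _
      rw [hAsymm u v]
      ring_nf
    have hdbl : X + X = ∑ u : V, ∑ v : V, A u v * (f u - f v) ^ 2 := by
      nth_rewrite 1 [hX1]
      nth_rewrite 1 [hswap]
      rw [← Finset.sum_add_distrib]
      apply Finset.sum_congr rfl; intro u _
      rw [← Finset.sum_add_distrib]
      apply Finset.sum_congr rfl; intro v _
      ring
    linarith
  have hX3 : X = ∑ e : E, ∑ u : V, ∑ v : V, a e u v * (f u - f v) ^ 2 := by
    rw [hX2]
    have hterm : ∀ u v : V, A u v * (f u - f v) ^ 2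
        = (∑ e : E, a e u v * (f u - f v) ^ 2) + ∑ e : E, a e v u * (f u - f v) ^ 2 := by
      intro u v
      by_cases h : u = v
      · subst h; simp
      · rw [hoff u v h, Finset.sum_mul, ← Finset.sum_add_distrib]
        apply Finset.sum_congr rfl; intro e _; ring
    simp only [hterm]
    have hsplit2 : ∑ u : V, ∑ v : V, ((∑ e : E, a e u v * (f u - f v) ^ 2)
          + ∑ e : E, a e v u * (f u - f v) ^ 2)
        = (∑ u : V, ∑ v : V, ∑ e : E, a e u v * (f u - f v) ^ 2)
          + ∑ u : V, ∑ v : V, ∑ e : E, a e v u * (f u - f v) ^ 2 := by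
      rw [← Finset.sum_add_distrib]
      apply Finset.sum_congr rfl; intro u _
      rw [← Finset.sum_add_distrib]
    rw [hsplit2]
    have h2 : (∑ u : V, ∑ v : V, ∑ e : E, a e v u * (f u - f v) ^ 2)
        = ∑ u : V, ∑ v : V, ∑ e : E, a e u v * (f u - f v) ^ 2 := by
      rw [Finset.sum_comm]
      apply Finset.sum_congr rfl; intro u _
      apply Finset.sum_congr rfl; intro v _
      apply Finset.sum_congr rfl; intro e _
      ring_nf
    have h3 : (∑ u : V, ∑ v : V, ∑ e : E, a e u v * (f u - f v) ^ 2)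
        = ∑ e : E, ∑ u : V, ∑ v : V, a e u v * (f u - f v) ^ 2 := by
      rw [show (∑ u : V, ∑ v : V, ∑ e : E, a e u v * (f u - f v) ^ 2)
          = ∑ u : V, ∑ e : E, ∑ v : V, a e u v * (f u - f v) ^ 2 from
        Finset.sum_congr rfl fun u _ => Finset.sum_comm]
      exact Finset.sum_comm
    rw [h2, h3]
    ring
  have part1 : X = ∑ e ∈ Finset.univ.filter (fun e : E => 0 < disc G f e),
      G.w e * (disc G f e) ^ 2 := by
    rw [hX3, Finset.sum_filter]
    apply Finset.sum_congr rfl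
    intro e _
    exact hedge e
  have part2 : X = 2 * Qform G f := by
    rw [hX3, Qform, ← mul_assoc]
    norm_num
    apply Finset.sum_congr rfl
    intro e _
    rw [hedge e]
    by_cases hd : 0 < disc G f e
    · rw [if_pos hd, max_eq_left hd.le]
    · rw [if_neg hd, max_eq_right (not_lt.mp hd)]
      simp
  refine ⟨part1, part2, fun _ => ?_⟩
  have hden : f ⬝ᵥ (Matrix.diagonal ω *ᵥ f) = ∑ u : V, ω u * (f u) ^ 2 := by
    simp only [dotProduct, Matrix.mulVec_diagonal]
    apply Finset.sum_congr rfl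
    intro u _
    ring
  rw [part2, hden, Qform]
  ring_nf
end
end

section
/- Let H=(V,E,w) be a directed hypergraph and suppose f ∈ ℝ^V has pairwise distinct coordinates. Then the quadratic form Q : ℝ^V → ℝ is (Fréchet) differentiable at f, and for each x ∈ V the partial derivative is ∂Q/∂f_x(f) = Σ_{e∈E : Δ_e(f)>0 and x∈T_e and f_x = max_{u∈T_e} f_u} w_e·Δ_e(f) − Σ_{e∈E : Δ_e(f)>0 and x∈H_e and f_x = min_{v∈H_e} f_v} w_e·Δ_e(f). -/
open Finset
open scoped Classical

noncomputable section

variable {V E : Type} [Fintype V] [DecidableEq V] [Fintype E]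

/-! Near an injective `f` every maximum over a tail and every minimum over a head is attained
at a unique vertex, and the strict inequalities singling it out persist for nearby `g`. So near
`f` each discrepancy is the linear map `g ↦ g uₑ - g vₑ`, and since `t ↦ ([t]⁺)²` is
differentiable with derivative `2 [t]⁺`, the chain rule gives the derivative of `Q`, whose value
on `Pi.single x 1` collects the edges whose extremal tail or head vertex is `x`. -/

open Filter Topology

theorem abs_sq_max_zero_sub_sub_le (x y : ℝ) :
    |max y 0 ^ 2 - max x 0 ^ 2 - (y - x) * (2 * max x 0)| ≤ (y - x) ^ 2 := by
  rw [abs_le]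
  rcases le_total x 0 with hx | hx <;> rcases le_total y 0 with hy | hy <;>
    simp only [max_eq_left, max_eq_right, hx, hy] <;> constructor <;> nlinarith

theorem hasDerivAt_sq_max_zero (x : ℝ) :
    HasDerivAt (fun y : ℝ => max y 0 ^ 2) (2 * max x 0) x := by
  rw [hasDerivAt_iff_isLittleO]
  refine Asymptotics.IsBigO.trans_isLittleO ?_ (Asymptotics.isLittleO_pow_sub_sub x one_lt_two)
  refine Asymptotics.IsBigO.of_bound 1 (Eventually.of_forall fun y => ?_)
  simpa [Real.norm_eq_abs, smul_eq_mul] using abs_sq_max_zero_sub_sub_le x y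

section Extremum

variable {ι α : Type*} [LinearOrder α] {s : Finset ι} {f : ι → α}

theorem Set.InjOn.mem_and_eq_sup'_iff (hf : Set.InjOn f s) (hs : s.Nonempty) {u x : ι}
    (hu : u ∈ s) (hfu : s.sup' hs f = f u) : x ∈ s ∧ f x = s.sup' hs f ↔ u = x :=
  ⟨fun ⟨hx, hfx⟩ => hf hu hx (hfu ▸ hfx).symm, by rintro rfl; exact ⟨hu, hfu.symm⟩⟩

theorem Set.InjOn.mem_and_eq_inf'_iff (hf : Set.InjOn f s) (hs : s.Nonempty) {v x : ι}
    (hv : v ∈ s) (hfv : s.inf' hs f = f v) : x ∈ s ∧ f x = s.inf' hs f ↔ v = x :=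
  ⟨fun ⟨hx, hfx⟩ => hf hv hx (hfv ▸ hfx).symm, by rintro rfl; exact ⟨hv, hfv.symm⟩⟩

variable [TopologicalSpace α] [OrderClosedTopology α]

theorem Set.InjOn.eventually_apply_le (hf : Set.InjOn f s) {a b : ι} (ha : a ∈ s) (hb : b ∈ s)
    (hab : f a ≤ f b) : ∀ᶠ g in 𝓝 f, g a ≤ g b := by
  rcases eq_or_ne a b with rfl | hne
  · exact Eventually.of_forall fun _ => le_rfl
  · have hopen : IsOpen {g : ι → α | g a < g b} :=
      isOpen_lt (continuous_apply a) (continuous_apply b)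
    filter_upwards [hopen.mem_nhds (hab.lt_of_ne (hf.ne ha hb hne))] with g hg using hg.le

theorem Set.InjOn.eventually_sup'_eq (hf : Set.InjOn f s) (hs : s.Nonempty) {u : ι}
    (hu : u ∈ s) (hfu : s.sup' hs f = f u) : ∀ᶠ g in 𝓝 f, s.sup' hs g = g u := by
  have hle : ∀ᶠ g in 𝓝 f, ∀ a ∈ s, g a ≤ g u := (eventually_all_finset s).2 fun a ha =>
    hf.eventually_apply_le ha hu (hfu ▸ le_sup' f ha)
  filter_upwards [hle] with g hg using le_antisymm (sup'_le _ _ hg) (le_sup' g hu)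

theorem Set.InjOn.eventually_inf'_eq (hf : Set.InjOn f s) (hs : s.Nonempty) {v : ι}
    (hv : v ∈ s) (hfv : s.inf' hs f = f v) : ∀ᶠ g in 𝓝 f, s.inf' hs g = g v := by
  have hle : ∀ᶠ g in 𝓝 f, ∀ a ∈ s, g v ≤ g a := (eventually_all_finset s).2 fun a ha =>
    hf.eventually_apply_le hv ha (hfv ▸ inf'_le f ha)
  filter_upwards [hle] with g hg using le_antisymm (inf'_le g hv) (le_inf' _ _ hg)

end Extremum

omit [DecidableEq V] in
theorem hasFDerivAt_disc (G : DirHyp V E) {f : V → ℝ} (hf : Function.Injective f) {e : E}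
    {u v : V} (hu : u ∈ G.Tl e) (hfu : (G.Tl e).sup' (G.Tl_ne e) f = f u) (hv : v ∈ G.Hd e)
    (hfv : (G.Hd e).inf' (G.Hd_ne e) f = f v) :
    HasFDerivAt (fun g => disc G g e)
      ((ContinuousLinearMap.proj u : (V → ℝ) →L[ℝ] ℝ) - ContinuousLinearMap.proj v) f := by
  refine ((hasFDerivAt_apply (𝕜 := ℝ) u f).sub (hasFDerivAt_apply v f)).congr_of_eventuallyEq ?_
  filter_upwards [hf.injOn.eventually_sup'_eq _ hu hfu, hf.injOn.eventually_inf'_eq _ hv hfv]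
    with g hgu hgv
  rw [disc, hgu, hgv]
  rfl

omit [DecidableEq V] in
theorem hasFDerivAt_Qform (G : DirHyp V E) {f : V → ℝ} (hf : Function.Injective f) {u v : E → V}
    (hu : ∀ e, u e ∈ G.Tl e) (hfu : ∀ e, (G.Tl e).sup' (G.Tl_ne e) f = f (u e))
    (hv : ∀ e, v e ∈ G.Hd e) (hfv : ∀ e, (G.Hd e).inf' (G.Hd_ne e) f = f (v e)) :
    HasFDerivAt (Qform G) (∑ e, (G.w e * max (disc G f e) 0) •
      ((ContinuousLinearMap.proj (u e) : (V → ℝ) →L[ℝ] ℝ) - ContinuousLinearMap.proj (v e))) f := by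
  have hterm (e : E) := ((hasDerivAt_sq_max_zero _).comp_hasFDerivAt f
    (hasFDerivAt_disc G hf (hu e) (hfu e) (hv e) (hfv e))).const_mul (G.w e)
  refine ((HasFDerivAt.fun_sum (u := univ) fun e _ => hterm e).const_mul (1 / 2 : ℝ))
    |>.congr_fderiv ?_
  simp only [Finset.smul_sum, smul_smul]
  exact Finset.sum_congr rfl fun e _ => by congr 1; ring

theorem ite_pos_and_mul_eq (w d : ℝ) (p : Prop) [Decidable p] :
    (if 0 < d ∧ p then w * d else 0) = w * max d 0 * if p then 1 else 0 := by
  by_cases hd : 0 < d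
  · simp [hd, hd.le]
  · simp [hd, max_eq_right (not_lt.1 hd)]

/-- if `f` has pairwise distinct coordinates then `Q` is Fréchet
differentiable at `f`, with the stated partial derivatives. -/
theorem Q_differentiable_of_injective (G : DirHyp V E) (f : V → ℝ)
    (hf : Function.Injective f) :
    ∃ L : (V → ℝ) →L[ℝ] ℝ, HasFDerivAt (Qform G) L f ∧
      ∀ x : V, L (Pi.single x 1) =
        (∑ e ∈ Finset.univ.filter
            (fun e : E => 0 < disc G f e ∧ x ∈ G.Tl e ∧
              f x = (G.Tl e).sup' (G.Tl_ne e) f),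
          G.w e * disc G f e)
        - (∑ e ∈ Finset.univ.filter
            (fun e : E => 0 < disc G f e ∧ x ∈ G.Hd e ∧
              f x = (G.Hd e).inf' (G.Hd_ne e) f),
          G.w e * disc G f e) := by
  choose u hu hfu using fun e => exists_mem_eq_sup' (G.Tl_ne e) f
  choose v hv hfv using fun e => exists_mem_eq_inf' (G.Hd_ne e) f
  refine ⟨_, hasFDerivAt_Qform G hf hu hfu hv hfv, fun x => ?_⟩
  simp only [_root_.sum_apply, _root_.smul_apply, _root_.sub_apply,
    ContinuousLinearMap.proj_apply, Pi.single_apply, smul_eq_mul, mul_sub, sum_sub_distrib,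
    sum_filter, ite_pos_and_mul_eq]
  simp only [hf.injOn.mem_and_eq_sup'_iff _ (hu _) (hfu _),
    hf.injOn.mem_and_eq_inf'_iff _ (hv _) (hfv _)]
end
end

section
/- Let H=(V,E,w) be a directed hypergraph, let σ be a linear order on V, and let f ∈ ℝ^V be consistent with σ (i.e., u <_σ v implies f_u ≤ f_v). Let E(σ) := { e ∈ E : the σ-maximum element of T_e is σ-strictly greater than the σ-minimum element of H_e }. Define g ∈ ℝ^V by g_x := Σ_{e∈E(σ) : x is the σ-maximum of T_e} w_e·Δ_e(f) − Σ_{e∈E(σ) : x is the σ-minimum of H_e} w_e·Δ_e(f). Then g is a subgradient of the quadratic form Q at f: for every h ∈ ℝ^V, Q(h) ≥ Q(f) + Σ_{x∈V} g_x·(h_x − f_x). -/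
/-!
If `f` is consistent with `σ`, the discrepancy of every edge is `Δ_e(f) = f(A_e) - f(B_e)`, where
`A_e` is the `σ`-maximum of `T_e` and `B_e` the `σ`-minimum of `H_e`; it can be positive only for
`e ∈ E(σ)`. Hence `⟪g, h - f⟫ = Σ_e w_e Δ_e(f)⁺ ((h - f)(A_e) - (h - f)(B_e))`, and the claim
splits into one inequality per edge: the tangent-line inequality of the convex function
`t ↦ (t⁺)² / 2` at `Δ_e(f)`, combined with `h(A_e) - h(B_e) ≤ Δ_e(h)`.
-/

open Finset
open scoped Classical

noncomputable section

variable {V E : Type} [Fintype V] [DecidableEq V] [Fintype E]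

/-- The gradient of the quadratic form restricted to the linear order `σ`:
`g_x = Σ_{e ∈ E(σ) : x = σ-max of T_e} w_e Δ_e(f) − Σ_{e ∈ E(σ) : x = σ-min of H_e} w_e Δ_e(f)`,
where `E(σ)` is the set of edges whose `σ`-maximum tail vertex is `σ`-strictly
greater than its `σ`-minimum head vertex. -/
def gradSigma (G : DirHyp V E) (σ : LinearOrder V) (f : V → ℝ) (x : V) : ℝ :=
  (∑ e ∈ Finset.univ.filter
      (fun e : E =>
        σ.lt (@Finset.min' V σ (G.Hd e) (G.Hd_ne e)) (@Finset.max' V σ (G.Tl e) (G.Tl_ne e)) ∧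
        x = @Finset.max' V σ (G.Tl e) (G.Tl_ne e)),
    G.w e * disc G f e)
  - (∑ e ∈ Finset.univ.filter
      (fun e : E =>
        σ.lt (@Finset.min' V σ (G.Hd e) (G.Hd_ne e)) (@Finset.max' V σ (G.Tl e) (G.Tl_ne e)) ∧
        x = @Finset.min' V σ (G.Hd e) (G.Hd_ne e)),
    G.w e * disc G f e)

theorem half_sq_posPart_add_mul_sub_le (d t : ℝ) :
    1 / 2 * max d 0 ^ 2 + max d 0 * (t - d) ≤ 1 / 2 * max t 0 ^ 2 := by
  rcases le_total d 0 with hd | hd <;> rcases le_total t 0 with ht | ht <;>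
    simp only [max_eq_left, max_eq_right, hd, ht] <;> nlinarith [sq_nonneg (t - d)]

theorem Monotone.sup'_eq_apply_max' {α β : Type*} [LinearOrder α] [LinearOrder β] {f : α → β}
    (hf : Monotone f) {s : Finset α} (hs : s.Nonempty) : s.sup' hs f = f (s.max' hs) :=
  (apply_sup'_eq_sup'_comp hs f fun _ _ => hf.map_max).symm

theorem Monotone.inf'_eq_apply_min' {α β : Type*} [LinearOrder α] [LinearOrder β] {f : α → β}
    (hf : Monotone f) {s : Finset α} (hs : s.Nonempty) : s.inf' hs f = f (s.min' hs) :=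
  (apply_inf'_eq_inf'_comp hs f fun _ _ => hf.map_min).symm

theorem sum_mul_sum_filter_and_eq {ι κ R : Type*} [Fintype κ] [DecidableEq κ]
    [NonUnitalNonAssocSemiring R] (s : Finset ι) (p : ι → Prop) [DecidablePred p] (M : ι → κ)
    (c : ι → R) (r : κ → R) :
    ∑ x, (∑ i ∈ s with p i ∧ x = M i, c i) * r x = ∑ i ∈ s with p i, c i * r (M i) := by
  simp only [sum_mul, sum_filter]
  rw [sum_comm]
  refine sum_congr rfl fun i _ => ?_
  split_ifs with hp <;> simp [hp]

namespace DirHyp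

variable {V E : Type} [Fintype V] [Fintype E] (G : DirHyp V E) (σ : LinearOrder V)

def tailMax (e : E) : V := @Finset.max' V σ (G.Tl e) (G.Tl_ne e)

def headMin (e : E) : V := @Finset.min' V σ (G.Hd e) (G.Hd_ne e)

theorem sub_le_disc (h : V → ℝ) (e : E) : h (G.tailMax σ e) - h (G.headMin σ e) ≤ disc G h e :=
  let := σ
  sub_le_sub (le_sup' h (max'_mem _ _)) (inf'_le h (min'_mem _ _))

variable {G σ} {f : V → ℝ}

theorem disc_eq_sub (hf : ∀ u v : V, σ.lt u v → f u ≤ f v) (e : E) :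
    disc G f e = f (G.tailMax σ e) - f (G.headMin σ e) := by
  let := σ
  have hmono : Monotone f := monotone_iff_forall_lt.2 hf
  rw [disc, hmono.sup'_eq_apply_max', hmono.inf'_eq_apply_min']
  rfl

theorem max_disc_zero_eq_ite (hf : ∀ u v : V, σ.lt u v → f u ≤ f v) (e : E) :
    max (disc G f e) 0 = if σ.lt (G.headMin σ e) (G.tailMax σ e) then disc G f e else 0 := by
  let := σ
  rw [disc_eq_sub hf]
  split_ifs with hlt
  · exact max_eq_left (sub_nonneg.2 (hf _ _ hlt))
  · exact max_eq_right (sub_nonpos.2 ((monotone_iff_forall_lt.2 hf) (not_lt.1 hlt)))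

theorem sum_gradSigma_mul [DecidableEq V] (hf : ∀ u v : V, σ.lt u v → f u ≤ f v) (r : V → ℝ) :
    ∑ x, gradSigma G σ f x * r x =
      ∑ e, G.w e * max (disc G f e) 0 * (r (G.tailMax σ e) - r (G.headMin σ e)) := by
  simp only [gradSigma, sub_mul, sum_sub_distrib]
  rw [sum_mul_sum_filter_and_eq, sum_mul_sum_filter_and_eq, ← sum_sub_distrib, sum_filter]
  refine sum_congr rfl fun e _ => ?_
  rw [max_disc_zero_eq_ite hf, tailMax, headMin]
  split_ifs <;> ring

theorem half_mul_sq_add_le (hf : ∀ u v : V, σ.lt u v → f u ≤ f v) (h : V → ℝ) (e : E) :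
    1 / 2 * (G.w e * max (disc G f e) 0 ^ 2) + G.w e * max (disc G f e) 0 *
      (h (G.tailMax σ e) - f (G.tailMax σ e) - (h (G.headMin σ e) - f (G.headMin σ e))) ≤
      1 / 2 * (G.w e * max (disc G h e) 0 ^ 2) := by
  have hw := G.w_nonneg e
  have hslope : 0 ≤ G.w e * max (disc G f e) 0 := mul_nonneg hw (le_max_right _ _)
  calc _ = G.w e * (1 / 2 * max (disc G f e) 0 ^ 2) + G.w e * max (disc G f e) 0 *
          (h (G.tailMax σ e) - h (G.headMin σ e) - disc G f e) := by
        rw [disc_eq_sub hf]; ring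
    _ ≤ G.w e * (1 / 2 * max (disc G f e) 0 ^ 2) + G.w e * max (disc G f e) 0 *
          (disc G h e - disc G f e) := by
        gcongr
        exact G.sub_le_disc σ h e
    _ ≤ 1 / 2 * (G.w e * max (disc G h e) 0 ^ 2) := by
        linarith [mul_le_mul_of_nonneg_left (half_sq_posPart_add_mul_sub_le (disc G f e)
          (disc G h e)) hw]

end DirHyp

/-- if `f` is consistent with the linear order `σ`, then
`∇Q_σ(f)` is a subgradient of `Q` at `f`. -/
theorem gradSigma_subgradient (G : DirHyp V E) (σ : LinearOrder V) (f : V → ℝ)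
    (hcons : ∀ u v : V, σ.lt u v → f u ≤ f v) :
    ∀ h : V → ℝ, Qform G h ≥ Qform G f + ∑ x : V, gradSigma G σ f x * (h x - f x) := by
  intro h
  rw [ge_iff_le, DirHyp.sum_gradSigma_mul hcons, Qform, Qform, mul_sum, mul_sum,
    ← sum_add_distrib]
  exact sum_le_sum fun e _ => DirHyp.half_mul_sq_add_le hcons h e
end
end

section
/- Let P be a finite nonempty set. Let I and S be finite index sets, where each e ∈ I carries a real c_e > 0 and a nonempty subset I_e ⊆ P, and each e ∈ S carries a real c_e > 0 and a nonempty subset S_e ⊆ P. For each linear order π on P define c(π) ∈ ℝ^P by c(π)_v := Σ_{e∈I : v is the π-minimum of I_e} c_e − Σ_{e∈S : v is the π-maximum of S_e} c_e. Suppose C ∈ ℝ^P satisfies Σ_{v∈P} C_v = Σ_{e∈I} c_e − Σ_{e∈S} c_e, and for every nonempty subset Y ⊆ P: Σ_{e∈I : I_e⊆Y} c_e − Σ_{e∈S : S_e∩Y≠∅} c_e ≤ Σ_{v∈Y} C_v ≤ Σ_{e∈I : I_e∩Y≠∅} c_e − Σ_{e∈S : S_e⊆Y} c_e. Then C lies in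 the convex hull of the finite set { c(π) : π is a linear order on P } ⊆ ℝ^P. -/
/-!
If `C` were outside the hull, a separating weight vector `w` would satisfy `w ⬝ᵥ C < w ⬝ᵥ c(π)`
for every `π`. Take `π` sorting `P` by increasing `w`. Every superlevel set `Y = {t ≤ w}` is then
a `π`-upper set, and the `π`-minimum of `I_e` lies in `Y` iff `I_e ⊆ Y`, while the `π`-maximum of
`S_e` lies in `Y` iff `S_e` meets `Y`; so `c(π)` sums over `Y` to exactly the lower bound imposed
on `C`. Hence `C - c(π)` has total sum `0` and nonnegative sums over all superlevel sets of `w`,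
and Abel summation gives `w ⬝ᵥ (C - c(π)) ≥ 0`, a contradiction.
-/

open Finset
open scoped Classical

noncomputable section

/-- The allocation vector induced by a linear order `π` on `P`:
each supply edge `e ∈ I` gives `c_e` to the `π`-minimum vertex of `I_e`, and
each demand edge `e ∈ S` takes `c_e` from the `π`-maximum vertex of `S_e`. -/
def allocVec {P I S : Type} [Fintype P] [Fintype I] [Fintype S]
    (cI : I → ℝ) (Ie : I → Finset P) (hIe : ∀ e, (Ie e).Nonempty)
    (cS : S → ℝ) (Se : S → Finset P) (hSe : ∀ e, (Se e).Nonempty)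
    (π : LinearOrder P) (v : P) : ℝ :=
  (∑ e ∈ Finset.univ.filter (fun e : I => v = @Finset.min' P π (Ie e) (hIe e)), cI e)
  - (∑ e ∈ Finset.univ.filter (fun e : S => v = @Finset.max' P π (Se e) (hSe e)), cS e)

section Abel

variable {ι R : Type*} [Fintype ι] [CommRing R] [LinearOrder R] [IsOrderedRing R]

theorem dotProduct_nonneg_of_sum_superlevel_nonneg (w d : ι → R) (hd : ∑ i, d i = 0)
    (h : ∀ t, 0 ≤ ∑ i with t ≤ w i, d i) : 0 ≤ w ⬝ᵥ d := by
  suffices ∀ T : Finset R, ∀ w : ι → R, (∀ i, w i ∈ T) →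
      (∀ t, 0 ≤ ∑ i with t ≤ w i, d i) → 0 ≤ w ⬝ᵥ d from
    this _ w (fun i => mem_image_of_mem w (mem_univ i)) h
  intro T
  -- Lowering the top value `a` of `w` to the next value `b` changes the sum by
  -- `(a - b) * ∑ i with a ≤ w i, d i`.
  induction T using Finset.induction_on_max with
  | empty =>
    intro w hw _
    have : IsEmpty ι := ⟨fun i => by simpa using hw i⟩
    simp [dotProduct]
  | insert a T haT ih =>
    intro w hw h
    rcases T.eq_empty_or_nonempty with rfl | hT
    · have hwa : ∀ i, w i = a := by simpa using hw
      simp [dotProduct, hwa, ← mul_sum, hd]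
    set b := T.max' hT
    have hba : b < a := haT b (T.max'_mem hT)
    have hsplit : ∀ i, w i * d i = min (w i) b * d i + (a - b) * if a ≤ w i then d i else 0 := by
      intro i
      rcases mem_insert.1 (hw i) with hi | hi
      · simp [hi, hba.le]; ring
      · have : w i ≤ b := T.le_max' _ hi
        simp [this, (this.trans_lt hba).not_ge]
    have hlevel : ∀ t, 0 ≤ ∑ i with t ≤ min (w i) b, d i := by
      intro t
      by_cases htb : t ≤ b
      · simpa [htb] using h t
      · simp [htb]
    have hmin : ∀ i, min (w i) b ∈ T := by
      intro i
      rcases mem_insert.1 (hw i) with hi | hi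
      · simpa [hi, hba.le] using T.max'_mem hT
      · rwa [min_eq_left (T.le_max' _ hi)]
    rw [dotProduct, sum_congr rfl fun i _ => hsplit i, sum_add_distrib, ← mul_sum, ← sum_filter]
    exact add_nonneg (ih _ hmin hlevel) (mul_nonneg (sub_nonneg.2 hba.le) (h a))

end Abel

instance LinearOrder.finite {α : Type*} [Finite α] : Finite (LinearOrder α) :=
  Finite.of_injective (fun π : LinearOrder α => π.le) fun _ _ h =>
    LinearOrder.ext fun x y => Iff.of_eq (congrFun₂ h x y)

theorem ContinuousLinearMap.exists_forall_eq_dotProduct {ι : Type*} [Fintype ι]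
    (f : (ι → ℝ) →L[ℝ] ℝ) : ∃ w : ι → ℝ, ∀ y, f y = w ⬝ᵥ y := by
  refine ⟨fun i => f (Pi.single i 1), fun y => ?_⟩
  conv_lhs => rw [pi_eq_sum_univ' y]
  simp [map_sum, dotProduct, mul_comm]

theorem mem_convexHull_of_forall_exists_dotProduct_le {ι : Type*} [Fintype ι]
    {G : Set (ι → ℝ)} (hG : G.Finite) {x : ι → ℝ}
    (h : ∀ w : ι → ℝ, ∃ g ∈ G, w ⬝ᵥ g ≤ w ⬝ᵥ x) : x ∈ convexHull ℝ G := by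
  by_contra hx
  obtain ⟨f, u, hfx, hfG⟩ :=
    geometric_hahn_banach_point_closed (convex_convexHull ℝ G) (hG.isClosed_convexHull ℝ) hx
  obtain ⟨w, hf⟩ := f.exists_forall_eq_dotProduct
  obtain ⟨g, hg, hgx⟩ := h w
  have := hfG g (subset_convexHull ℝ G hg)
  rw [hf] at hfx this
  linarith

abbrev weightOrder {α β : Type*} [Fintype α] [LinearOrder β] (w : α → β) : LinearOrder α :=
  LinearOrder.lift' (fun a => toLex (w a, Fintype.equivFin α a)) fun a b h => by
    simpa using congrArg (fun p => (ofLex p).2) h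

theorem weightOrder_monotone {α β : Type*} [Fintype α] [LinearOrder β] (w : α → β) :
    @Monotone α β (weightOrder w).toPartialOrder.toPreorder _ w :=
  fun _ _ h => Prod.Lex.monotone_fst _ _ h

theorem IsUpperSet.min'_mem_iff {α : Type*} [LinearOrder α] {Y : Set α} (hY : IsUpperSet Y)
    {s : Finset α} (hs : s.Nonempty) : s.min' hs ∈ Y ↔ ↑s ⊆ Y :=
  ⟨fun h _ hx => hY (s.min'_le _ hx) h, fun h => h (s.min'_mem hs)⟩

theorem IsUpperSet.max'_mem_iff {α : Type*} [LinearOrder α] {Y : Set α} (hY : IsUpperSet Y)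
    {s : Finset α} (hs : s.Nonempty) : s.max' hs ∈ Y ↔ ∃ x ∈ s, x ∈ Y :=
  ⟨fun h => ⟨_, s.max'_mem hs, h⟩, fun ⟨_, hx, hxY⟩ => hY (s.le_max' _ hx) hxY⟩

theorem sum_allocVec_of_isUpperSet {P I S : Type} [Fintype P] [DecidableEq P] [Fintype I]
    [Fintype S] {cI : I → ℝ} {Ie : I → Finset P} {hIe : ∀ e, (Ie e).Nonempty}
    {cS : S → ℝ} {Se : S → Finset P} {hSe : ∀ e, (Se e).Nonempty} (π : LinearOrder P) {Y : Finset P}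
    (hY : IsUpperSet (Y : Set P)) :
    ∑ v ∈ Y, allocVec cI Ie hIe cS Se hSe π v =
      (∑ e with Ie e ⊆ Y, cI e) - ∑ e with (Se e ∩ Y).Nonempty, cS e := by
  -- `π` brings its own decidable equality on `P`, which `allocVec` uses
  obtain rfl : ‹DecidableEq P› = LinearOrder.toDecidableEq := Subsingleton.elim _ _
  simp only [allocVec, sum_sub_distrib, sum_filter]
  rw [sum_comm, sum_comm (s := Y)]
  simp only [sum_ite_eq']
  congr 1 <;> refine sum_congr rfl fun e _ => if_congr ?_ rfl rfl
  · exact (hY.min'_mem_iff _).trans coe_subset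
  · exact (hY.max'_mem_iff _).trans (by simp [Finset.Nonempty])

theorem target_in_convexHull_of_bounds_general
    (P I S : Type) [Fintype P] [DecidableEq P] [Fintype I] [Fintype S]
    (cI : I → ℝ) (Ie : I → Finset P) (hIe : ∀ e, (Ie e).Nonempty)
    (cS : S → ℝ) (Se : S → Finset P) (hSe : ∀ e, (Se e).Nonempty)
    (C : P → ℝ)
    (hsum : ∑ v : P, C v = (∑ e : I, cI e) - ∑ e : S, cS e)
    (hlow : ∀ Y : Finset P, Y.Nonempty →
      (∑ e ∈ Finset.univ.filter (fun e : I => Ie e ⊆ Y), cI e)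
        - (∑ e ∈ Finset.univ.filter (fun e : S => (Se e ∩ Y).Nonempty), cS e)
        ≤ ∑ v ∈ Y, C v) :
    C ∈ convexHull ℝ
      {g : P → ℝ | ∃ π : LinearOrder P, g = allocVec cI Ie hIe cS Se hSe π} := by
  have hfinite : {g : P → ℝ | ∃ π : LinearOrder P, g = allocVec cI Ie hIe cS Se hSe π}.Finite :=
    (Set.finite_range fun π => allocVec cI Ie hIe cS Se hSe π).subset
      fun _ ⟨π, hg⟩ => ⟨π, hg.symm⟩
  refine mem_convexHull_of_forall_exists_dotProduct_le hfinite fun w =>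
    ⟨_, ⟨weightOrder w, rfl⟩, ?_⟩
  let _ : LinearOrder P := weightOrder w
  set g := allocVec cI Ie hIe cS Se hSe (weightOrder w)
  have hsum_g : ∑ v, g v = (∑ e : I, cI e) - ∑ e : S, cS e := by
    rw [sum_allocVec_of_isUpperSet _ (by rw [coe_univ]; exact isUpperSet_univ)]
    simp [hSe]
  have hlevel : ∀ t, 0 ≤ ∑ v with t ≤ w v, (C - g) v := by
    intro t
    have hY : IsUpperSet (↑(univ.filter (t ≤ w ·)) : Set P) := by
      rw [coe_filter_univ]
      exact fun a b hab ha => ha.trans (weightOrder_monotone w hab)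
    rw [Pi.sub_def, sum_sub_distrib, sum_allocVec_of_isUpperSet _ hY, sub_nonneg]
    rcases (univ.filter (t ≤ w ·)).eq_empty_or_nonempty with hempty | hne
    · simp [hempty, subset_empty, (hIe _).ne_empty]
    · exact hlow _ hne
  have := dotProduct_nonneg_of_sum_superlevel_nonneg w (C - g) (by simp [hsum, hsum_g]) hlevel
  rwa [dotProduct_sub, sub_nonneg] at this

/-- any target allocation `C` satisfying the conservation constraint
and the lower/upper bound constraints for every nonempty subset lies in the convex
hull of the allocation vectors induced by linear orders on `P`. -/
theorem target_in_convexHull_of_bounds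
    (P I S : Type) [Fintype P] [DecidableEq P] [Nonempty P] [Fintype I] [Fintype S]
    (cI : I → ℝ) (hcI : ∀ e, 0 < cI e) (Ie : I → Finset P) (hIe : ∀ e, (Ie e).Nonempty)
    (cS : S → ℝ) (hcS : ∀ e, 0 < cS e) (Se : S → Finset P) (hSe : ∀ e, (Se e).Nonempty)
    (C : P → ℝ)
    (hsum : ∑ v : P, C v = (∑ e : I, cI e) - ∑ e : S, cS e)
    (hlow : ∀ Y : Finset P, Y.Nonempty →
      (∑ e ∈ Finset.univ.filter (fun e : I => Ie e ⊆ Y), cI e)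
        - (∑ e ∈ Finset.univ.filter (fun e : S => (Se e ∩ Y).Nonempty), cS e)
        ≤ ∑ v ∈ Y, C v)
    (hup : ∀ Y : Finset P, Y.Nonempty →
      (∑ v ∈ Y, C v)
        ≤ (∑ e ∈ Finset.univ.filter (fun e : I => (Ie e ∩ Y).Nonempty), cI e)
          - (∑ e ∈ Finset.univ.filter (fun e : S => Se e ⊆ Y), cS e)) :
    C ∈ convexHull ℝ
      {g : P → ℝ | ∃ π : LinearOrder P, g = allocVec cI Ie hIe cS Se hSe π} :=
  target_in_convexHull_of_bounds_general P I S cI Ie hIe cS Se hSe C hsum hlow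
end
end

section
/- Let H=(V,E,w) be a directed hypergraph with weighted-degree vertex weights ω, and suppose ω_u > 0 for all u ∈ V. Suppose f* ∈ ℝ^V is nonzero, satisfies Σ_{u∈V} ω_u f*_u = 0, and attains the minimum D(f*) = γ₂ of the discrepancy ratio over all such vectors. Then there exists a valid splitting A for f* (a symmetric matrix with row sums ω obtained by distributing each active edge's weight over S_e(f*)×I_e(f*)) such that (W − A) f* = γ₂ · W f*; that is, f* is an eigenvector of W^{-1}(W − A) with eigenvalue γ₂. -/
open Finset Matrix
open scoped Classical

noncomputable section

variable {V E : Type} [Fintype V] [DecidableEq V] [Fintype E]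

/-!
Perturbing the minimiser `f` in a direction `g` and comparing with `γ₂` gives the first-order
condition `γ₂ ⟪W f, g⟫ ≤ ∑ₑ wₑ [Δₑ f]⁺ (max_{Sₑ} g - min_{Iₑ} g)`; the right-hand side is the
right derivative of half the numerator of the discrepancy ratio, and constant shifts of `g`
change neither side, so the orthogonality constraint can be dropped. The right-hand side is the
support function, at `g`, of the polytope of vectors `∑ₑ (cₑ - dₑ)` where `cₑ, dₑ ≥ 0` have mass
`wₑ [Δₑ f]⁺` and live on `Sₑ`, resp. `Iₑ`. By Hahn–Banach, `γ₂ W f` lies in that polytope.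
Splitting the weight of each active edge by the product coupling of `cₑ` and `dₑ` then gives a
valid splitting `A` with `(W - A) f = ∑ₑ (cₑ - dₑ) = γ₂ W f`.
-/

open Filter Topology

lemma eventually_sup'_add_smul_le {ι : Type*} (s : Finset ι) (hs : s.Nonempty) (f g : ι → ℝ)
    {B : ℝ} (hB : ∀ u ∈ s, f u = s.sup' hs f → g u ≤ B) :
    ∀ᶠ t in 𝓝[>] (0 : ℝ), s.sup' hs (f + t • g) ≤ s.sup' hs f + t * B := by
  have hu : ∀ u ∈ s, ∀ᶠ t in 𝓝[>] (0 : ℝ), f u + t * g u ≤ s.sup' hs f + t * B := by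
    intro u hu
    rcases (s.le_sup' f hu).eq_or_lt with hmax | hlt
    · filter_upwards [self_mem_nhdsWithin] with t (ht : 0 < t)
      nlinarith [hB u hu hmax]
    · have hlim : Tendsto (fun t : ℝ => f u + t * g u - (s.sup' hs f + t * B)) (𝓝[>] 0)
          (𝓝 (f u - s.sup' hs f)) :=
        tendsto_nhdsWithin_of_tendsto_nhds ((by fun_prop : Continuous _).tendsto' _ _ (by simp))
      filter_upwards [hlim.eventually_lt_const (sub_neg.2 hlt)] with t ht
      linarith
  filter_upwards [(eventually_all_finset s).2 hu] with t ht
  exact Finset.sup'_le _ _ fun u hu => by simpa using ht u hu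

lemma eventually_le_inf'_add_smul {ι : Type*} (s : Finset ι) (hs : s.Nonempty) (f g : ι → ℝ)
    {B : ℝ} (hB : ∀ u ∈ s, f u = s.inf' hs f → B ≤ g u) :
    ∀ᶠ t in 𝓝[>] (0 : ℝ), s.inf' hs f + t * B ≤ s.inf' hs (f + t • g) := by
  have hu : ∀ u ∈ s, ∀ᶠ t in 𝓝[>] (0 : ℝ), s.inf' hs f + t * B ≤ f u + t * g u := by
    intro u hu
    rcases (s.inf'_le f hu).eq_or_lt with hmin | hlt
    · filter_upwards [self_mem_nhdsWithin] with t (ht : 0 < t)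
      nlinarith [hB u hu hmin.symm]
    · have hlim : Tendsto (fun t : ℝ => s.inf' hs f + t * B - (f u + t * g u)) (𝓝[>] 0)
          (𝓝 (s.inf' hs f - f u)) :=
        tendsto_nhdsWithin_of_tendsto_nhds ((by fun_prop : Continuous _).tendsto' _ _ (by simp))
      filter_upwards [hlim.eventually_lt_const (sub_neg.2 hlt)] with t ht
      linarith
  filter_upwards [(eventually_all_finset s).2 hu] with t ht
  exact Finset.le_inf' _ _ fun u hu => by simpa using ht u hu

lemma nonneg_of_eventually_nonneg_mul_add_sq {a b : ℝ}
    (h : ∀ᶠ t in 𝓝[>] (0 : ℝ), 0 ≤ t * a + t ^ 2 * b) : 0 ≤ a := by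
  have hlim : Tendsto (fun t : ℝ => a + t * b) (𝓝[>] 0) (𝓝 a) :=
    tendsto_nhdsWithin_of_tendsto_nhds ((by fun_prop : Continuous _).tendsto' _ _ (by simp))
  refine ge_of_tendsto hlim ?_
  filter_upwards [h, self_mem_nhdsWithin] with t ht (htpos : 0 < t)
  exact nonneg_of_mul_nonneg_right (by linarith) htpos

lemma max_add_zero_sq_le (a b : ℝ) : max (a + b) 0 ^ 2 ≤ (max a 0 + b) ^ 2 := by
  rcases le_or_gt (a + b) 0 with h | h
  · simpa [max_eq_right h] using sq_nonneg _
  · rw [max_eq_left h.le]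
    exact pow_le_pow_left₀ h.le (by linarith [le_max_left a 0]) 2

lemma sum_mul_add_mul_sq {ι : Type*} (s : Finset ι) (w x y : ι → ℝ) (t : ℝ) :
    ∑ i ∈ s, w i * (x i + t * y i) ^ 2 = ∑ i ∈ s, w i * x i ^ 2
      + t * (2 * ∑ i ∈ s, w i * x i * y i) + t ^ 2 * ∑ i ∈ s, w i * y i ^ 2 := by
  simp only [Finset.mul_sum, ← Finset.sum_add_distrib]
  exact Finset.sum_congr rfl fun i _ => by ring

lemma mem_of_forall_exists_dotProduct_le {ι : Type*} [Fintype ι] [DecidableEq ι]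
    {K : Set (ι → ℝ)} (hconv : Convex ℝ K) (hclosed : IsClosed K) {b : ι → ℝ}
    (h : ∀ g : ι → ℝ, ∃ k ∈ K, b ⬝ᵥ g ≤ k ⬝ᵥ g) : b ∈ K := by
  by_contra hb
  obtain ⟨ψ, r, hψK, hψb⟩ := geometric_hahn_banach_closed_point hconv hclosed hb
  set g : ι → ℝ := fun i => ψ fun j => if i = j then 1 else 0
  have hψ : ∀ x, ψ x = x ⬝ᵥ g := fun x => by
    simpa [dotProduct] using ψ.toLinearMap.pi_apply_eq_sum_univ x
  obtain ⟨k, hk, hle⟩ := h g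
  linarith [hψK k hk, hψ k, hψ b]

def massOn {ι : Type*} [Fintype ι] (s : Finset ι) (m : ℝ) : Set (ι → ℝ) :=
  {c | (∀ u, 0 ≤ c u) ∧ (∀ u ∉ s, c u = 0) ∧ ∑ u, c u = m}

section massOn

variable {ι : Type*} [Fintype ι] {s : Finset ι} {m : ℝ} {c : ι → ℝ}

lemma convex_massOn (s : Finset ι) (m : ℝ) : Convex ℝ (massOn s m) := by
  rintro x ⟨hx0, hxs, hxm⟩ y ⟨hy0, hys, hym⟩ a b ha hb hab
  refine ⟨fun u => ?_, fun u hu => ?_, ?_⟩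
  · simpa using add_nonneg (mul_nonneg ha (hx0 u)) (mul_nonneg hb (hy0 u))
  · simp [hxs u hu, hys u hu]
  · simp [Finset.sum_add_distrib, ← Finset.mul_sum, hxm, hym, ← add_mul, hab]

lemma isCompact_massOn (s : Finset ι) (m : ℝ) : IsCompact (massOn s m) := by
  have hsupp : IsClosed {c : ι → ℝ | ∀ u ∉ s, c u = 0} := by
    simp only [Set.ofPred_forall]
    exact isClosed_iInter fun u => isClosed_iInter fun _ =>
      isClosed_eq (continuous_apply u) continuous_const
  have hclosed : IsClosed (massOn s m) :=
    (isClosed_le continuous_const continuous_id).inter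
      (hsupp.inter (isClosed_eq (by fun_prop) continuous_const))
  refine (isCompact_Icc (a := 0) (b := fun _ => m)).of_isClosed_subset hclosed ?_
  rintro c ⟨hc0, -, hcm⟩
  exact ⟨hc0, fun u => hcm ▸ Finset.single_le_sum (fun v _ => hc0 v) (Finset.mem_univ u)⟩

lemma single_mem_massOn [DecidableEq ι] {u : ι} (hu : u ∈ s) (hm : 0 ≤ m) :
    Pi.single u m ∈ massOn s m := by
  refine ⟨fun v => ?_, fun v hv => ?_, by simp⟩
  · rcases eq_or_ne v u with rfl | h <;> simp [*]
  · simp [show v ≠ u by rintro rfl; exact hv hu]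

lemma sum_eq_of_mem_massOn (hc : c ∈ massOn s m) : ∑ u ∈ s, c u = m := by
  obtain ⟨-, hcs, hcm⟩ := hc
  rwa [← Finset.sum_subset (Finset.subset_univ s) fun u _ hu => hcs u hu] at hcm

lemma eq_zero_of_mem_massOn_zero (hc : c ∈ massOn s 0) (u : ι) : c u = 0 :=
  (Finset.sum_eq_zero_iff_of_nonneg fun v _ => hc.1 v).1 hc.2.2 u (Finset.mem_univ u)

end massOn

section Coupling

variable {ι : Type*} [Fintype ι] {s t : Finset ι} {w D : ℝ} {x y : ι → ℝ}

lemma pos_and_mem_of_mul_div_ne_zero (hx : x ∈ massOn s (w * max D 0))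
    (hy : y ∈ massOn t (w * max D 0)) {u v : ι} (h : x u * y v / (w * D ^ 2) ≠ 0) :
    0 < D ∧ u ∈ s ∧ v ∈ t := by
  refine ⟨not_le.1 fun hD => h ?_, by_contra fun hu => h ?_, by_contra fun hv => h ?_⟩
  · rw [max_eq_right hD, mul_zero] at hx
    simp [eq_zero_of_mem_massOn_zero hx u]
  · simp [hx.2.1 u hu]
  · simp [hy.2.1 v hv]

lemma mul_sum_mul_div_eq (hx : x ∈ massOn s (w * max D 0)) (hy : ∑ v, y v = w * max D 0)
    (u : ι) : D * ∑ v, x u * y v / (w * D ^ 2) = x u := by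
  rw [← Finset.sum_div, ← Finset.mul_sum, hy]
  by_cases hmass : w * max D 0 = 0
  · rw [hmass] at hx
    simp [eq_zero_of_mem_massOn_zero hx u]
  have hw : w ≠ 0 := left_ne_zero_of_mul hmass
  have hD : 0 < D := not_le.1 fun hD => hmass (by rw [max_eq_right hD, mul_zero])
  rw [max_eq_left hD.le]
  field_simp

lemma sum_sum_mul_div_eq (hx : x ∈ massOn s (w * max D 0)) (hy : y ∈ massOn t (w * max D 0))
    (hD : 0 < D) : ∑ u ∈ s, ∑ v ∈ t, x u * y v / (w * D ^ 2) = w := by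
  simp only [← Finset.sum_div, ← Finset.sum_mul_sum, sum_eq_of_mem_massOn hx,
    sum_eq_of_mem_massOn hy, max_eq_left hD.le]
  rcases eq_or_ne w 0 with rfl | hw
  · simp
  · field_simp

end Coupling

lemma exists_mem_massOn_sum_sub_eq_of_forall_dotProduct_le {ι κ : Type*} [Fintype ι]
    [DecidableEq ι] [Fintype κ] {s t : κ → Finset ι} (hs : ∀ e, (s e).Nonempty)
    (ht : ∀ e, (t e).Nonempty) {m : κ → ℝ} (hm : ∀ e, 0 ≤ m e) {b : ι → ℝ}
    (hb : ∀ g, b ⬝ᵥ g ≤ ∑ e, m e * ((s e).sup' (hs e) g - (t e).inf' (ht e) g)) :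
    ∃ c d : κ → ι → ℝ, (∀ e, c e ∈ massOn (s e) (m e)) ∧ (∀ e, d e ∈ massOn (t e) (m e)) ∧
      ∑ e, (c e - d e) = b := by
  let L : (κ → (ι → ℝ) × (ι → ℝ)) →ₗ[ℝ] ι → ℝ :=
    ∑ e, (LinearMap.fst ℝ _ _ - LinearMap.snd ℝ _ _) ∘ₗ LinearMap.proj e
  have hL : ∀ p, L p = ∑ e, ((p e).1 - (p e).2) := fun p => by simp [L]
  let P := Set.univ.pi fun e => massOn (s e) (m e) ×ˢ massOn (t e) (m e)
  suffices b ∈ L '' P by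
    obtain ⟨p, hp, rfl⟩ := this
    exact ⟨fun e => (p e).1, fun e => (p e).2, fun e => (hp e trivial).1,
      fun e => (hp e trivial).2, (hL p).symm⟩
  have hconv : Convex ℝ P :=
    convex_pi fun e _ => (convex_massOn _ _).prod (convex_massOn _ _)
  have hcompact : IsCompact P :=
    isCompact_univ_pi fun e => (isCompact_massOn _ _).prod (isCompact_massOn _ _)
  refine mem_of_forall_exists_dotProduct_le (hconv.linear_image L)
    (hcompact.image L.continuous_of_finiteDimensional).isClosed fun g => ?_
  choose u hu hgu using fun e => (s e).exists_mem_eq_sup' (hs e) g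
  choose v hv hgv using fun e => (t e).exists_mem_eq_inf' (ht e) g
  refine ⟨L fun e => (Pi.single (u e) (m e), Pi.single (v e) (m e)),
    ⟨_, fun e _ => ⟨single_mem_massOn (hu e) (hm e), single_mem_massOn (hv e) (hm e)⟩, rfl⟩, ?_⟩
  simpa [hL, sum_dotProduct, single_dotProduct, hgu, hgv, mul_sub] using hb g

section withRowSums

variable {ι : Type*} [Fintype ι] [DecidableEq ι] (B : Matrix ι ι ℝ) (ω : ι → ℝ)

def withRowSums : Matrix ι ι ℝ := B - diagonal fun u => ∑ v, B u v - ω u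

lemma withRowSums_apply_of_ne {u v : ι} (h : u ≠ v) : withRowSums B ω u v = B u v := by
  simp [withRowSums, h]

lemma sum_withRowSums_apply (u : ι) : ∑ v, withRowSums B ω u v = ω u := by
  simp [withRowSums, Finset.sum_sub_distrib, diagonal_apply]

lemma Matrix.IsSymm.withRowSums {B : Matrix ι ι ℝ} (hB : B.IsSymm) (ω : ι → ℝ) :
    (withRowSums B ω).IsSymm :=
  hB.sub (isSymm_diagonal _)

lemma diagonal_sub_withRowSums_mulVec_apply (f : ι → ℝ) (u : ι) :
    ((diagonal ω - withRowSums B ω) *ᵥ f) u = ∑ v, B u v * (f u - f v) := by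
  simp only [withRowSums, sub_mulVec, Pi.sub_apply, mulVec_diagonal]
  simp only [mulVec, dotProduct, ← Finset.sum_mul, mul_sub, Finset.sum_sub_distrib]
  ring

end withRowSums

section Discrepancy

-- redeclared so that these lemmas do not take the ambient `[DecidableEq V]`
variable {V E : Type} [Fintype V] [Fintype E] (G : DirHyp V E)

lemma Se_nonempty (f : V → ℝ) (e : E) : (Se G f e).Nonempty := by
  obtain ⟨u, hu, h⟩ := (G.Tl e).exists_mem_eq_sup' (G.Tl_ne e) f
  exact ⟨u, Finset.mem_filter.2 ⟨hu, h.symm⟩⟩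

lemma Ie_nonempty (f : V → ℝ) (e : E) : (Ie G f e).Nonempty := by
  obtain ⟨u, hu, h⟩ := (G.Hd e).exists_mem_eq_inf' (G.Hd_ne e) f
  exact ⟨u, Finset.mem_filter.2 ⟨hu, h.symm⟩⟩

/-- The right derivative of `t ↦ disc G (f + t • g) e` at `t = 0`. -/
def discDeriv (f g : V → ℝ) (e : E) : ℝ :=
  (Se G f e).sup' (Se_nonempty G f e) g - (Ie G f e).inf' (Ie_nonempty G f e) g

/-- Half the derivative of `w_e ([Δ_e]⁺)²` with respect to `Δ_e`. -/
def edgeLoad (f : V → ℝ) (e : E) : ℝ := G.w e * max (disc G f e) 0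

lemma edgeLoad_nonneg (f : V → ℝ) (e : E) : 0 ≤ edgeLoad G f e :=
  mul_nonneg (G.w_nonneg e) (le_max_right _ _)

lemma eventually_disc_add_smul_le (f g : V → ℝ) :
    ∀ᶠ t in 𝓝[>] (0 : ℝ), ∀ e, disc G (f + t • g) e ≤ disc G f e + t * discDeriv G f g e := by
  refine eventually_all.2 fun e => ?_
  filter_upwards [eventually_sup'_add_smul_le (G.Tl e) (G.Tl_ne e) f g
      (B := (Se G f e).sup' (Se_nonempty G f e) g)
      fun u hu hmax => (Se G f e).le_sup' g (Finset.mem_filter.2 ⟨hu, hmax⟩),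
    eventually_le_inf'_add_smul (G.Hd e) (G.Hd_ne e) f g
      (B := (Ie G f e).inf' (Ie_nonempty G f e) g)
      fun u hu hmin => (Ie G f e).inf'_le g (Finset.mem_filter.2 ⟨hu, hmin⟩)]
    with t hsup hinf
  rw [disc, disc, discDeriv]
  linarith

lemma discDeriv_sub_const (f g : V → ℝ) (c : ℝ) (e : E) :
    discDeriv G f (fun u => g u - c) e = discDeriv G f g e := by
  have hsup := map_finset_sup' (OrderIso.subRight c) (Se_nonempty G f e) g
  have hinf := map_finset_inf' (OrderIso.subRight c) (Ie_nonempty G f e) g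
  simp only [OrderIso.subRight_apply, Function.comp_def] at hsup hinf
  rw [discDeriv, discDeriv, ← hsup, ← hinf]
  ring

lemma sub_eq_disc_of_mem_Se_of_mem_Ie {f : V → ℝ} {e : E} {u v : V} (hu : u ∈ Se G f e)
    (hv : v ∈ Ie G f e) : f u - f v = disc G f e := by
  rw [(Finset.mem_filter.1 hu).2, (Finset.mem_filter.1 hv).2, disc]

lemma sum_add_mul_sub_eq_disc_mul {f : V → ℝ} {e : E} {a : V → V → ℝ}
    (ha : ∀ u v, a u v ≠ 0 → u ∈ Se G f e ∧ v ∈ Ie G f e) (u : V) :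
    ∑ v, (a u v + a v u) * (f u - f v) = disc G f e * (∑ v, a u v - ∑ v, a v u) := by
  have hflow : ∀ u v, a u v * (f u - f v) = disc G f e * a u v := fun u v => by
    by_cases h : a u v = 0
    · simp [h]
    · obtain ⟨hu, hv⟩ := ha u v h
      rw [sub_eq_disc_of_mem_Se_of_mem_Ie G hu hv, mul_comm]
  have hflow' : ∀ v, a v u * (f u - f v) = -(disc G f e * a v u) := fun v => by
    rw [← hflow v u]
    ring
  rw [Finset.sum_congr rfl fun v _ => by rw [add_mul, hflow, hflow', ← sub_eq_add_neg],
    Finset.sum_sub_distrib, ← Finset.mul_sum, ← Finset.mul_sum, mul_sub]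

end Discrepancy

section Gamma2

variable (G : DirHyp V E)

lemma vw_nonneg (u : V) : 0 ≤ vw G u :=
  Finset.sum_nonneg fun e _ => by split_ifs <;> simp [G.w_nonneg e]

lemma gamma2_mul_sum_le {h : V → ℝ} (hh : ∑ u, vw G u * h u = 0) :
    gamma2 G * ∑ u, vw G u * h u ^ 2 ≤ ∑ e, G.w e * max (disc G h e) 0 ^ 2 := by
  have hnum : ∀ k : V → ℝ, 0 ≤ ∑ e, G.w e * max (disc G k e) 0 ^ 2 := fun k =>
    Finset.sum_nonneg fun e _ => mul_nonneg (G.w_nonneg e) (sq_nonneg _)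
  have hden : ∀ k : V → ℝ, 0 ≤ ∑ u, vw G u * k u ^ 2 := fun k =>
    Finset.sum_nonneg fun u _ => mul_nonneg (vw_nonneg G u) (sq_nonneg _)
  rcases (hden h).eq_or_lt with hzero | hpos
  · rw [← hzero, mul_zero]
    exact hnum h
  have hne : h ≠ 0 := by
    rintro rfl
    simp at hpos
  have hle : gamma2 G ≤ discRatio G h :=
    csInf_le ⟨0, by rintro x ⟨k, -, -, rfl⟩; exact div_nonneg (hnum k) (hden k)⟩ ⟨h, hne, hh, rfl⟩
  rwa [discRatio, le_div_iff₀ hpos] at hle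

lemma gamma2_mul_le_of_sum_eq_zero (hpos : ∀ u, 0 < vw G u) {f : V → ℝ} (hne : f ≠ 0)
    (horth : ∑ u, vw G u * f u = 0) (hmin : discRatio G f = gamma2 G) {g : V → ℝ}
    (hg : ∑ u, vw G u * g u = 0) :
    gamma2 G * ∑ u, vw G u * f u * g u ≤ ∑ e, edgeLoad G f e * discDeriv G f g e := by
  set γ := gamma2 G
  obtain ⟨u₀, hu₀⟩ := Function.ne_iff.1 hne
  have hden : 0 < ∑ u, vw G u * f u ^ 2 :=
    Finset.sum_pos' (fun u _ => mul_nonneg (vw_nonneg G u) (sq_nonneg _))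
      ⟨u₀, Finset.mem_univ _, mul_pos (hpos u₀) (sq_pos_of_ne_zero hu₀)⟩
  have hnum : ∑ e, G.w e * max (disc G f e) 0 ^ 2 = γ * ∑ u, vw G u * f u ^ 2 := by
    rw [← hmin, discRatio, div_mul_cancel₀ _ hden.ne']
  suffices h : 0 ≤ 2 * (∑ e, edgeLoad G f e * discDeriv G f g e - γ * ∑ u, vw G u * f u * g u) by
    linarith
  refine nonneg_of_eventually_nonneg_mul_add_sq
    (b := ∑ e, G.w e * discDeriv G f g e ^ 2 - γ * ∑ u, vw G u * g u ^ 2) ?_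
  filter_upwards [eventually_disc_add_smul_le G f g] with t ht
  have horth_t : ∑ u, vw G u * (f + t • g) u = 0 := by
    simp only [Pi.add_apply, Pi.smul_apply, smul_eq_mul, mul_add, Finset.sum_add_distrib, horth,
      mul_left_comm _ t, ← Finset.mul_sum, hg, mul_zero, add_zero]
  have hnum_t : ∑ e, G.w e * max (disc G (f + t • g) e) 0 ^ 2
      ≤ ∑ e, G.w e * (max (disc G f e) 0 + t * discDeriv G f g e) ^ 2 :=
    Finset.sum_le_sum fun e _ => mul_le_mul_of_nonneg_left
      ((pow_le_pow_left₀ (le_max_right _ _) (max_le_max_right 0 (ht e)) 2).trans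
        (max_add_zero_sq_le _ _)) (G.w_nonneg e)
  have key := (gamma2_mul_sum_le G horth_t).trans hnum_t
  simp only [Pi.add_apply, Pi.smul_apply, smul_eq_mul, sum_mul_add_mul_sq, hnum] at key
  simp only [edgeLoad]
  linarith

lemma gamma2_mul_le (hpos : ∀ u, 0 < vw G u) {f : V → ℝ} (hne : f ≠ 0)
    (horth : ∑ u, vw G u * f u = 0) (hmin : discRatio G f = gamma2 G) (g : V → ℝ) :
    gamma2 G * ∑ u, vw G u * f u * g u ≤ ∑ e, edgeLoad G f e * discDeriv G f g e := by
  obtain ⟨u₀, -⟩ := Function.ne_iff.1 hne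
  have hW : 0 < ∑ u, vw G u := Finset.sum_pos (fun u _ => hpos u) ⟨u₀, Finset.mem_univ _⟩
  set c := (∑ u, vw G u * g u) / ∑ u, vw G u
  have hg : ∑ u, vw G u * (g u - c) = 0 := by
    simp only [mul_sub, Finset.sum_sub_distrib, ← Finset.sum_mul, c, mul_div_cancel₀ _ hW.ne',
      sub_self]
  have h := gamma2_mul_le_of_sum_eq_zero G hpos hne horth hmin hg
  simpa only [discDeriv_sub_const, mul_sub, Finset.sum_sub_distrib, ← Finset.sum_mul, horth,
    zero_mul, sub_zero] using h

end Gamma2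

lemma exists_mem_massOn_sum_sub_eq_gamma2_smul (G : DirHyp V E) (hpos : ∀ u, 0 < vw G u)
    {f : V → ℝ} (hne : f ≠ 0) (horth : ∑ u, vw G u * f u = 0)
    (hmin : discRatio G f = gamma2 G) :
    ∃ c d : E → V → ℝ, (∀ e, c e ∈ massOn (Se G f e) (edgeLoad G f e)) ∧
      (∀ e, d e ∈ massOn (Ie G f e) (edgeLoad G f e)) ∧
      ∑ e, (c e - d e) = gamma2 G • (diagonal (vw G) *ᵥ f) :=
  exists_mem_massOn_sum_sub_eq_of_forall_dotProduct_le (Se_nonempty G f) (Ie_nonempty G f)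
    (edgeLoad_nonneg G f) fun g => by
      simpa [dotProduct, mulVec_diagonal, Finset.mul_sum, mul_assoc, discDeriv] using
        gamma2_mul_le G hpos hne horth hmin g

lemma exists_validSplitting_mulVec_eq (G : DirHyp V E) (ω f : V → ℝ) {c d : E → V → ℝ}
    (hc : ∀ e, c e ∈ massOn (Se G f e) (edgeLoad G f e))
    (hd : ∀ e, d e ∈ massOn (Ie G f e) (edgeLoad G f e)) :
    ∃ A, ValidSplitting G ω f A ∧ (diagonal ω - A) *ᵥ f = ∑ e, (c e - d e) := by
  -- the product coupling of `c e` and `d e`, scaled so that `Δ_e` times its marginals are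
  -- `c e` and `d e`
  set a : E → V → V → ℝ := fun e u v => c e u * d e v / (G.w e * disc G f e ^ 2)
  have ha_supp : ∀ e u v, a e u v ≠ 0 → 0 < disc G f e ∧ u ∈ Se G f e ∧ v ∈ Ie G f e :=
    fun e u v => pos_and_mem_of_mul_div_ne_zero (hc e) (hd e)
  let B : Matrix V V ℝ := of fun u v => ∑ e, (a e u v + a e v u)
  have hB : B.IsSymm := IsSymm.ext fun u v => by simp [B, add_comm]
  refine ⟨withRowSums B ω, ⟨hB.withRowSums ω, a,
    fun e u v => div_nonneg (mul_nonneg ((hc e).1 u) ((hd e).1 v))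
      (mul_nonneg (G.w_nonneg e) (sq_nonneg _)),
    ha_supp, fun e hD => sum_sum_mul_div_eq (hc e) (hd e) hD,
    fun u v huv => withRowSums_apply_of_ne B ω huv, sum_withRowSums_apply B ω⟩, funext fun u => ?_⟩
  rw [diagonal_sub_withRowSums_mulVec_apply, Finset.sum_apply]
  simp only [B, of_apply, Finset.sum_mul, Pi.sub_apply]
  rw [Finset.sum_comm]
  refine Finset.sum_congr rfl fun e _ => ?_
  rw [sum_add_mul_sub_eq_disc_mul G (fun u v h => (ha_supp e u v h).2) u, mul_sub,
    mul_sum_mul_div_eq (hc e) (hd e).2.2, ← mul_sum_mul_div_eq (hd e) (hc e).2.2 u]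
  simp only [a, mul_comm (c e _) (d e u)]

/-- a minimizer `f*` of the discrepancy ratio among nonzero vectors
with `Σ_u ω_u f*_u = 0` is an eigenvector with eigenvalue `γ₂`:
there is a valid splitting `A` for `f*` with `(W - A) f* = γ₂ • (W f*)`. -/
theorem minimizer_is_eigenvector (G : DirHyp V E) (hpos : ∀ u : V, 0 < vw G u)
    (fstar : V → ℝ) (hne : fstar ≠ 0)
    (horth : (∑ u : V, vw G u * fstar u) = 0)
    (hmin : discRatio G fstar = gamma2 G) :
    ∃ A : Matrix V V ℝ, ValidSplitting G (vw G) fstar A ∧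
      (Matrix.diagonal (vw G) - A) *ᵥ fstar
        = gamma2 G • (Matrix.diagonal (vw G) *ᵥ fstar) := by
  obtain ⟨c, d, hc, hd, hcd⟩ := exists_mem_massOn_sum_sub_eq_gamma2_smul G hpos hne horth hmin
  obtain ⟨A, hA, hAf⟩ := exists_validSplitting_mulVec_eq G (vw G) fstar hc hd
  exact ⟨A, hA, hAf.trans hcd⟩
end
end

section
/- Let P be a finite nonempty set with positive vertex weights ω_v > 0. Let I and S be finite index sets, where each e ∈ I carries a real c_e > 0 and a nonempty subset I_e ⊆ P (a supply edge), and each e ∈ S carries a real c_e > 0 and a nonempty subset S_e ⊆ P (a demand edge). For nonempty X ⊆ P define the density δ(X) := (Σ_{e∈I : I_e⊆X} c_e − Σ_{e∈S : S_e∩X≠∅} c_e) / ω(X), where ω(X) := Σ_{v∈X} ω_v, and set δ_M := δ(P). Suppose δ(X) ≤ δ_M for every nonempty X ⊆ P. Then there exist nonnegative reals x_v(e) for each e ∈ I and v ∈ I_e, and nonnegative reals y_v(e) for each e ∈ S and v ∈ S_e, such that Σ_{v∈I_e} x_v(e) = c_e for every e ∈ I, Σ_{v∈S_e} y_v(e)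 = c_e for every e ∈ S, and for every v ∈ P: Σ_{e∈I : v∈I_e} x_v(e) − Σ_{e∈S : v∈S_e} y_v(e) = ω_v · δ_M. -/
/-!
Minimize the quadratic cost `∑ v, (net_v - ω_v δ_M)² / ω_v` over the compact set of allocations.
Shifting a little mass inside one edge cannot lower the cost at a minimizer, so, writing
`f v = (net_v - ω_v δ_M) / ω_v`, a supply edge only feeds vertices where `f` is minimal on the edge
and a demand edge only drains vertices where `f` is maximal on the edge. On the set `X` where `f`
attains its maximum `m`, supply edges not contained in `X` therefore give `X` nothing and demand
edges meeting `X` take their whole rate from `X`; the net rate into `X`, which is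
`(δ_M + m) ω(X)`, is then bounded by the density numerator of `X`, hence by `δ_M ω(X)`, and
`m ≤ 0`. Since `∑ v, ω_v f v = 0`, `f` vanishes.
-/

open Finset

section Distributions

variable {P : Type*}

def distributions (s : Finset P) (c : ℝ) : Set (P → ℝ) :=
  {a | (∀ v, 0 ≤ a v) ∧ (∀ v ∉ s, a v = 0) ∧ ∑ v ∈ s, a v = c}

variable {s : Finset P} {c : ℝ} {a : P → ℝ}

theorem sum_univ_of_mem_distributions [Fintype P] (ha : a ∈ distributions s c) :
    ∑ v, a v = c := by
  rw [← ha.2.2]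
  exact (sum_subset (subset_univ s) fun v _ hv => ha.2.1 v hv).symm

theorem sum_le_of_mem_distributions [Fintype P] (ha : a ∈ distributions s c) (X : Finset P) :
    ∑ v ∈ X, a v ≤ c :=
  sum_univ_of_mem_distributions ha ▸ sum_le_univ_sum_of_nonneg ha.1

theorem sum_eq_of_mem_distributions [Fintype P] (ha : a ∈ distributions s c) {X : Finset P}
    (hX : ∀ v ∉ X, a v = 0) : ∑ v ∈ X, a v = c :=
  sum_univ_of_mem_distributions ha ▸ sum_subset (subset_univ X) fun v _ hv => hX v hv

theorem mem_of_mem_distributions_of_ne_zero (ha : a ∈ distributions s c) {v : P}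
    (hv : a v ≠ 0) : v ∈ s :=
  by_contra fun h => hv (ha.2.1 v h)

theorem isCompact_distributions [Fintype P] (s : Finset P) (c : ℝ) :
    IsCompact (distributions s c) := by
  have hclosed : IsClosed (distributions s c) := by
    have hsupp : IsClosed {a : P → ℝ | ∀ v ∉ s, a v = 0} := by
      convert isClosed_biInter (s := (↑s : Set P)ᶜ) fun v _ =>
        isClosed_eq (continuous_apply v) (continuous_const (y := (0 : ℝ)))
      ext
      simp
    exact .inter (isClosed_Ici (a := 0))
      (.inter hsupp (isClosed_eq (by fun_prop) continuous_const))
  refine (isCompact_univ_pi fun _ => isCompact_Icc (a := 0) (b := c)).of_isClosed_subset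
    hclosed fun a ha v _ => ⟨ha.1 v, ?_⟩
  simpa using sum_le_of_mem_distributions ha {v}

theorem distributions_nonempty [DecidableEq P] (hs : s.Nonempty) (hc : 0 ≤ c) :
    (distributions s c).Nonempty := by
  obtain ⟨w, hw⟩ := hs
  refine ⟨Pi.single w c, fun v => ?_, fun v hv => ?_, ?_⟩
  · rcases eq_or_ne v w with rfl | h <;> simp [*]
  · exact Pi.single_eq_of_ne (ne_of_mem_of_not_mem hw hv).symm (M := fun _ => ℝ) c
  · simp [hw]

theorem add_transfer_mem_distributions [DecidableEq P] (ha : a ∈ distributions s c) {v w : P}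
    (hv : v ∈ s) (hw : w ∈ s) {ε : ℝ} (hε : 0 ≤ ε) (hεv : ε ≤ a v) :
    a + (Pi.single w ε - Pi.single v ε) ∈ distributions s c := by
  obtain ⟨hnonneg, hsupp, hsum⟩ := ha
  refine ⟨fun u => ?_, fun u hu => ?_, ?_⟩
  · have : 0 ≤ Pi.single (M := fun _ => ℝ) w ε u := by
      rcases eq_or_ne u w with rfl | h <;> simp [*]
    rcases eq_or_ne u v with rfl | h
    · simp only [Pi.add_apply, Pi.sub_apply, Pi.single_eq_same]; linarith
    · simp only [Pi.add_apply, Pi.sub_apply, Pi.single_eq_of_ne h]; linarith [hnonneg u]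
  · simp [hsupp u hu, ne_of_mem_of_not_mem hw hu |>.symm, ne_of_mem_of_not_mem hv hu |>.symm]
  · simp [sum_add_distrib, sum_sub_distrib, hsum, hv, hw]

end Distributions

theorem add_single_mem_univ_pi {ι α : Type*} [DecidableEq ι] [AddZeroClass α] {F : ι → Set α}
    {x : ι → α} (hx : x ∈ Set.univ.pi F) {i : ι} {t : α} (ht : x i + t ∈ F i) :
    x + Pi.single i t ∈ Set.univ.pi F := by
  intro j _
  rcases eq_or_ne j i with rfl | h
  · simpa using ht
  · simpa [h] using hx j trivial

section WeightedSumSq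

variable {P : Type*} [Fintype P] [DecidableEq P]

noncomputable def weightedSumSq (ω D : P → ℝ) : ℝ := ∑ v, D v ^ 2 / ω v

theorem weightedSumSq_add_transfer (ω D : P → ℝ) {v w : P} (hvw : v ≠ w) (ε : ℝ) :
    weightedSumSq ω (D + (Pi.single w ε - Pi.single v ε)) =
      weightedSumSq ω D - 2 * ε * (D v / ω v - D w / ω w) + ε ^ 2 * (1 / ω v + 1 / ω w) := by
  have hout : ∀ u ∈ univ, u ∉ ({v, w} : Finset P) →
      (D + (Pi.single w ε - Pi.single v ε) : P → ℝ) u ^ 2 / ω u - D u ^ 2 / ω u = 0 := by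
    intro u _ hu
    simp only [mem_insert, mem_singleton, not_or] at hu
    simp [hu.1, hu.2]
  have hdiff := sum_subset (subset_univ _) hout
  rw [sum_sub_distrib, sum_sub_distrib, sum_pair hvw, sum_pair hvw] at hdiff
  simp only [Pi.add_apply, Pi.sub_apply, Pi.single_eq_same, Pi.single_eq_of_ne hvw,
    Pi.single_eq_of_ne hvw.symm] at hdiff
  rw [weightedSumSq, weightedSumSq]
  linear_combination -hdiff

theorem div_le_div_of_weightedSumSq_le_add_transfer {ω D : P → ℝ} (hω : ∀ u, 0 < ω u)
    {v w : P} {ε₁ : ℝ} (hε₁ : 0 < ε₁)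
    (hmin : ∀ ε, 0 < ε → ε ≤ ε₁ →
      weightedSumSq ω D ≤ weightedSumSq ω (D + (Pi.single w ε - Pi.single v ε))) :
    D v / ω v ≤ D w / ω w := by
  by_contra! hlt
  have hvw : v ≠ w := by rintro rfl; exact lt_irrefl _ hlt
  set d := D v / ω v - D w / ω w
  set k := 1 / ω v + 1 / ω w
  have hd : 0 < d := sub_pos.2 hlt
  have hk : 0 < k := by have := hω v; have := hω w; positivity
  set ε := min ε₁ (d / k)
  have hε : 0 < ε := lt_min hε₁ (div_pos hd hk)
  have hεk : ε * k ≤ d := (le_div_iff₀ hk).1 (min_le_right _ _)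
  have := hmin ε hε (min_le_left _ _)
  rw [weightedSumSq_add_transfer ω D hvw] at this
  nlinarith

section Allocations

variable {P I S : Type*}

def allocations (cI : I → ℝ) (Ie : I → Finset P) (cS : S → ℝ) (Se : S → Finset P) :
    Set ((I → P → ℝ) × (S → P → ℝ)) :=
  (Set.univ.pi fun e => distributions (Ie e) (cI e)) ×ˢ
    (Set.univ.pi fun e => distributions (Se e) (cS e))

noncomputable def netRate [Fintype I] [Fintype S] (p : (I → P → ℝ) × (S → P → ℝ)) : P → ℝ :=
  ∑ e, p.1 e - ∑ e, p.2 e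

noncomputable def deviation [Fintype I] [Fintype S] (ω : P → ℝ) (δ : ℝ)
    (p : (I → P → ℝ) × (S → P → ℝ)) : P → ℝ :=
  netRate p - fun v => ω v * δ

variable {cI : I → ℝ} {Ie : I → Finset P} {cS : S → ℝ} {Se : S → Finset P}

theorem isCompact_allocations [Fintype P] (cI : I → ℝ) (Ie : I → Finset P) (cS : S → ℝ)
    (Se : S → Finset P) : IsCompact (allocations cI Ie cS Se) :=
  (isCompact_univ_pi fun _ => isCompact_distributions _ _).prod
    (isCompact_univ_pi fun _ => isCompact_distributions _ _)

theorem allocations_nonempty [DecidableEq P] (hcI : ∀ e, 0 ≤ cI e) (hIe : ∀ e, (Ie e).Nonempty)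
    (hcS : ∀ e, 0 ≤ cS e) (hSe : ∀ e, (Se e).Nonempty) :
    (allocations cI Ie cS Se).Nonempty :=
  (Set.univ_pi_nonempty_iff.2 fun e => distributions_nonempty (hIe e) (hcI e)).prod
    (Set.univ_pi_nonempty_iff.2 fun e => distributions_nonempty (hSe e) (hcS e))

theorem continuous_weightedSumSq_deviation [Fintype P] [Fintype I] [Fintype S] (ω : P → ℝ)
    (δ : ℝ) :
    Continuous fun p : (I → P → ℝ) × (S → P → ℝ) => weightedSumSq ω (deviation ω δ p) := by
  unfold weightedSumSq deviation netRate
  fun_prop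

theorem deviation_add_single_fst [Fintype I] [Fintype S] [DecidableEq I] {ω : P → ℝ} {δ : ℝ}
    (p : (I → P → ℝ) × (S → P → ℝ)) (e : I) (t : P → ℝ) :
    deviation ω δ (p.1 + Pi.single e t, p.2) = deviation ω δ p + t := by
  simp only [deviation, netRate, Pi.add_apply, sum_add_distrib, Finset.sum_pi_single', mem_univ,
    if_true]
  abel

theorem deviation_add_single_snd [Fintype I] [Fintype S] [DecidableEq S] {ω : P → ℝ} {δ : ℝ}
    (p : (I → P → ℝ) × (S → P → ℝ)) (e : S) (t : P → ℝ) :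
    deviation ω δ (p.1, p.2 + Pi.single e t) = deviation ω δ p - t := by
  simp only [deviation, netRate, Pi.add_apply, sum_add_distrib, Finset.sum_pi_single', mem_univ,
    if_true]
  abel

theorem netRate_eq_sum_filter [DecidableEq P] [Fintype I] [Fintype S]
    {p : (I → P → ℝ) × (S → P → ℝ)} (hp : p ∈ allocations cI Ie cS Se) (v : P) :
    netRate p v = ∑ e ∈ univ.filter (fun e => v ∈ Ie e), p.1 e v -
      ∑ e ∈ univ.filter (fun e => v ∈ Se e), p.2 e v := by
  rw [sum_filter_of_ne fun e _ => mem_of_mem_distributions_of_ne_zero (hp.1 e trivial),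
    sum_filter_of_ne fun e _ => mem_of_mem_distributions_of_ne_zero (hp.2 e trivial)]
  simp [netRate]

theorem sum_deviation_eq_zero [Fintype P] [Fintype I] [Fintype S]
    {p : (I → P → ℝ) × (S → P → ℝ)} {ω : P → ℝ} {δ : ℝ} (hp : p ∈ allocations cI Ie cS Se)
    (hδ : δ * ∑ v, ω v = ∑ e, cI e - ∑ e, cS e) : ∑ v, deviation ω δ p v = 0 := by
  have hI : ∑ v, ∑ e, p.1 e v = ∑ e, cI e := by
    rw [sum_comm]; exact sum_congr rfl fun e _ => sum_univ_of_mem_distributions (hp.1 e trivial)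
  have hS : ∑ v, ∑ e, p.2 e v = ∑ e, cS e := by
    rw [sum_comm]; exact sum_congr rfl fun e _ => sum_univ_of_mem_distributions (hp.2 e trivial)
  simp only [deviation, netRate, Pi.sub_apply, Finset.sum_apply, sum_sub_distrib, hI, hS,
    ← sum_mul]
  linarith

end Allocations

section Minimizer

variable {P I S : Type*} [Fintype P] [DecidableEq P] [Fintype I] [Fintype S]
  {ω : P → ℝ} {δ : ℝ} {cI : I → ℝ} {Ie : I → Finset P} {cS : S → ℝ} {Se : S → Finset P}
  {p : (I → P → ℝ) × (S → P → ℝ)}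

theorem deviation_div_le_of_fst_pos (hω : ∀ u, 0 < ω u) (hp : p ∈ allocations cI Ie cS Se)
    (hmin : IsMinOn (fun q => weightedSumSq ω (deviation ω δ q)) (allocations cI Ie cS Se) p)
    {e : I} {v w : P} (hw : w ∈ Ie e) (hpos : 0 < p.1 e v) :
    deviation ω δ p v / ω v ≤ deviation ω δ p w / ω w := by
  classical
  have hv := mem_of_mem_distributions_of_ne_zero (hp.1 e trivial) hpos.ne'
  refine div_le_div_of_weightedSumSq_le_add_transfer hω hpos fun ε hε hεv => ?_
  have hq : (p.1 + Pi.single e (Pi.single w ε - Pi.single v ε), p.2) ∈ allocations cI Ie cS Se :=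
    ⟨add_single_mem_univ_pi hp.1
      (add_transfer_mem_distributions (hp.1 e trivial) hv hw hε.le hεv), hp.2⟩
  simpa only [deviation_add_single_fst] using isMinOn_iff.1 hmin _ hq

theorem deviation_div_le_of_snd_pos (hω : ∀ u, 0 < ω u) (hp : p ∈ allocations cI Ie cS Se)
    (hmin : IsMinOn (fun q => weightedSumSq ω (deviation ω δ q)) (allocations cI Ie cS Se) p)
    {e : S} {v w : P} (hw : w ∈ Se e) (hpos : 0 < p.2 e v) :
    deviation ω δ p w / ω w ≤ deviation ω δ p v / ω v := by
  classical
  have hv := mem_of_mem_distributions_of_ne_zero (hp.2 e trivial) hpos.ne'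
  refine div_le_div_of_weightedSumSq_le_add_transfer hω hpos fun ε hε hεv => ?_
  have hq : (p.1, p.2 + Pi.single e (Pi.single w ε - Pi.single v ε)) ∈ allocations cI Ie cS Se :=
    ⟨hp.1, add_single_mem_univ_pi hp.2
      (add_transfer_mem_distributions (hp.2 e trivial) hv hw hε.le hεv)⟩
  simpa only [deviation_add_single_snd, sub_sub_eq_add_sub, sub_add_eq_add_sub, add_sub_assoc]
    using isMinOn_iff.1 hmin _ hq

theorem sum_netRate_le (hp : p ∈ allocations cI Ie cS Se) (X : Finset P)
    (hI : ∀ e, ¬Ie e ⊆ X → ∀ v ∈ X, p.1 e v = 0)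
    (hS : ∀ e, (Se e ∩ X).Nonempty → ∀ v ∉ X, p.2 e v = 0) :
    ∑ v ∈ X, netRate p v ≤
      (∑ e ∈ univ.filter (fun e => Ie e ⊆ X), cI e) -
        ∑ e ∈ univ.filter (fun e => (Se e ∩ X).Nonempty), cS e := by
  have hsupply : ∑ e, ∑ v ∈ X, p.1 e v ≤ ∑ e ∈ univ.filter (fun e => Ie e ⊆ X), cI e := by
    rw [sum_filter]
    refine sum_le_sum fun e _ => ?_
    split_ifs with h
    · exact sum_le_of_mem_distributions (hp.1 e trivial) X
    · exact (sum_eq_zero (hI e h)).le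
  have hdemand :
      ∑ e ∈ univ.filter (fun e => (Se e ∩ X).Nonempty), cS e ≤ ∑ e, ∑ v ∈ X, p.2 e v := by
    rw [sum_filter]
    refine sum_le_sum fun e _ => ?_
    split_ifs with h
    · exact (sum_eq_of_mem_distributions (hp.2 e trivial) (hS e h)).ge
    · exact sum_nonneg fun v _ => (hp.2 e trivial).1 v
  have hswap : ∑ v ∈ X, netRate p v = ∑ e, ∑ v ∈ X, p.1 e v - ∑ e, ∑ v ∈ X, p.2 e v := by
    simp only [netRate, Pi.sub_apply, Finset.sum_apply, sum_sub_distrib]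
    rw [sum_comm, sum_comm (s := X)]
  linarith

theorem sum_netRate_le_of_isMinOn (hω : ∀ v, 0 < ω v) (hp : p ∈ allocations cI Ie cS Se)
    (hmin : IsMinOn (fun q => weightedSumSq ω (deviation ω δ q)) (allocations cI Ie cS Se) p)
    {m : ℝ} {X : Finset P} (hX : ∀ u ∈ X, deviation ω δ p u / ω u = m)
    (hXc : ∀ u ∉ X, deviation ω δ p u / ω u < m) :
    ∑ v ∈ X, netRate p v ≤
      (∑ e ∈ univ.filter (fun e => Ie e ⊆ X), cI e) -
        ∑ e ∈ univ.filter (fun e => (Se e ∩ X).Nonempty), cS e := by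
  refine sum_netRate_le hp X (fun e he u hu => ?_) fun e ⟨w, hw⟩ u hu => ?_
  · obtain ⟨w, hw, hwX⟩ := not_subset.1 he
    refine le_antisymm (not_lt.1 fun hpos => ?_) ((hp.1 e trivial).1 u)
    have := deviation_div_le_of_fst_pos hω hp hmin hw hpos
    linarith [hX u hu, hXc w hwX]
  · obtain ⟨hwe, hwX⟩ := mem_inter.1 hw
    refine le_antisymm (not_lt.1 fun hpos => ?_) ((hp.2 e trivial).1 u)
    have := deviation_div_le_of_snd_pos hω hp hmin hwe hpos
    linarith [hX w hwX, hXc u hu]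

theorem deviation_div_nonpos [Nonempty P] (hω : ∀ v, 0 < ω v)
    (hdens : ∀ X : Finset P, X.Nonempty →
      ((∑ e ∈ univ.filter (fun e => Ie e ⊆ X), cI e) -
          ∑ e ∈ univ.filter (fun e => (Se e ∩ X).Nonempty), cS e) / (∑ v ∈ X, ω v) ≤ δ)
    (hp : p ∈ allocations cI Ie cS Se)
    (hmin : IsMinOn (fun q => weightedSumSq ω (deviation ω δ q)) (allocations cI Ie cS Se) p)
    (v : P) : deviation ω δ p v / ω v ≤ 0 := by
  set f := fun u => deviation ω δ p u / ω u
  obtain ⟨u₀, -, hu₀⟩ := exists_max_image univ f univ_nonempty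
  set X := univ.filter fun u => f u₀ ≤ f u
  have hX : X.Nonempty := ⟨u₀, mem_filter.2 ⟨mem_univ _, le_rfl⟩⟩
  have hfX : ∀ u ∈ X, f u = f u₀ := fun u hu =>
    le_antisymm (hu₀ u (mem_univ u)) (mem_filter.1 hu).2
  have hnet : ∑ u ∈ X, netRate p u = (δ + f u₀) * ∑ u ∈ X, ω u := by
    rw [mul_sum]
    refine sum_congr rfl fun u hu => ?_
    have : deviation ω δ p u = f u₀ * ω u := by
      rw [← hfX u hu]; exact (div_mul_cancel₀ _ (hω u).ne').symm
    simp only [deviation, Pi.sub_apply] at this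
    linarith
  have hωX : 0 < ∑ u ∈ X, ω u := sum_pos (fun u _ => hω u) hX
  have hbound := sum_netRate_le_of_isMinOn hω hp hmin hfX fun u hu => by simpa [X] using hu
  have hdens_X := (div_le_iff₀ hωX).1 (hdens X hX)
  have hmax : f u₀ ≤ 0 := by nlinarith
  exact (hu₀ v (mem_univ v)).trans hmax

end Minimizer

/-- existence of a feasible measure-rate allocation in the
densest-subset setting, when every nonempty subset has density at most
`δ_M = δ(P)`. -/
theorem exists_allocation_of_density_le
    (P I S : Type) [Fintype P] [DecidableEq P] [Nonempty P] [Fintype I] [Fintype S]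
    (ω : P → ℝ) (hω : ∀ v, 0 < ω v)
    (cI : I → ℝ) (hcI : ∀ e, 0 < cI e) (Ie : I → Finset P) (hIe : ∀ e, (Ie e).Nonempty)
    (cS : S → ℝ) (hcS : ∀ e, 0 < cS e) (Se : S → Finset P) (hSe : ∀ e, (Se e).Nonempty)
    (δM : ℝ) (hδM : δM = ((∑ e : I, cI e) - ∑ e : S, cS e) / ∑ v : P, ω v)
    (hdens : ∀ X : Finset P, X.Nonempty →
      ((∑ e ∈ Finset.univ.filter (fun e : I => Ie e ⊆ X), cI e)
          - ∑ e ∈ Finset.univ.filter (fun e : S => (Se e ∩ X).Nonempty), cS e)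
        / (∑ v ∈ X, ω v) ≤ δM) :
    ∃ (x : I → P → ℝ) (y : S → P → ℝ),
      (∀ e v, 0 ≤ x e v) ∧ (∀ e v, 0 ≤ y e v) ∧
      (∀ e : I, ∑ v ∈ Ie e, x e v = cI e) ∧
      (∀ e : S, ∑ v ∈ Se e, y e v = cS e) ∧
      (∀ v : P,
        (∑ e ∈ Finset.univ.filter (fun e : I => v ∈ Ie e), x e v)
          - (∑ e ∈ Finset.univ.filter (fun e : S => v ∈ Se e), y e v)
        = ω v * δM) := by
  obtain ⟨p, hp, hmin⟩ := (isCompact_allocations cI Ie cS Se).exists_isMinOn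
    (allocations_nonempty (fun e => (hcI e).le) hIe (fun e => (hcS e).le) hSe)
    (continuous_weightedSumSq_deviation ω δM).continuousOn
  have hδ : δM * ∑ v, ω v = ∑ e, cI e - ∑ e, cS e := by
    rw [hδM, div_mul_cancel₀ _ (sum_pos (fun v _ => hω v) univ_nonempty).ne']
  have hnonpos : ∀ v, deviation ω δM p v ≤ 0 := fun v => by
    simpa [div_le_iff₀ (hω v)] using deviation_div_nonpos hω hdens hp hmin v
  have hzero : ∀ v, deviation ω δM p v = 0 := fun v =>
    (sum_eq_zero_iff_of_nonpos fun v _ => hnonpos v).1 (sum_deviation_eq_zero hp hδ) v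
      (mem_univ v)
  refine ⟨p.1, p.2, fun e => (hp.1 e trivial).1, fun e => (hp.2 e trivial).1,
    fun e => (hp.1 e trivial).2.2, fun e => (hp.2 e trivial).2.2, fun v => ?_⟩
  rw [← netRate_eq_sum_filter hp v, ← sub_eq_zero]
  exact hzero v
end WeightedSumSq
end

section
/- Let H=(V,E,w) be a directed hypergraph with positive vertex weights ω_u > 0, let f ∈ ℝ^V, and let E₊ := { e ∈ E : Δ_e(f) > 0 }. Suppose g ∈ ℝ^V and reals φ_u(e), defined for e ∈ E₊ and u ∈ S_e(f) ∪ I_e(f), satisfy: (i) ω_u·g_u = Σ_{e∈E₊ : u∈S_e(f)∪I_e(f)} φ_u(e) for every u ∈ V (the empty sum being 0); (ii) for u ∈ S_e(f), φ_u(e) ≤ 0, and φ_u(e) ≠ 0 only if g_u = max_{v∈S_e(f)} g_v; (iii) for u ∈ I_e(f), φ_u(e) ≥ 0, and φ_u(e) ≠ 0 only if g_u = min_{v∈I_e(f)} g_v; (iv) Σ_{u∈S_e(f)} φ_u(e) = −w_e·Δ_e(f) and Σ_{u∈I_e(f)} φ_u(e) = w_e·Δ_e(f) for every e ∈ E₊.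 Then Σ_{u∈V} ω_u g_u² = −Σ_{e∈E₊} w_e · Δ_e(f) · ( max_{u∈S_e(f)} g_u − min_{v∈I_e(f)} g_v ). -/
open Finset
open scoped Classical

noncomputable section

variable {V E : Type} [Fintype V] [DecidableEq V] [Fintype E]

lemma Se_ne (G : DirHyp V E) (f : V → ℝ) (e : E) : (Se G f e).Nonempty := by
  obtain ⟨u, hu, h⟩ := Finset.exists_mem_eq_sup' (G.Tl_ne e) f
  exact ⟨u, Finset.mem_filter.mpr ⟨hu, h.symm⟩⟩

lemma Ie_ne (G : DirHyp V E) (f : V → ℝ) (e : E) : (Ie G f e).Nonempty := by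
  obtain ⟨v, hv, h⟩ := Finset.exists_mem_eq_inf' (G.Hd_ne e) f
  exact ⟨v, Finset.mem_filter.mpr ⟨hv, h.symm⟩⟩

/-- for any measure rates `φ_u(e)` satisfying the diffusion rules
with first derivative `g`, we have
`Σ_u ω_u g_u² = − Σ_{e active} w_e Δ_e(f) (max_{S_e(f)} g − min_{I_e(f)} g)`. -/
theorem norm_sq_deriv_eq (G : DirHyp V E) (ω : V → ℝ) (hω : ∀ u, 0 < ω u)
    (f g : V → ℝ) (φ : E → V → ℝ)
    (hi : ∀ u : V, ω u * g u =
      ∑ e ∈ Finset.univ.filter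
          (fun e : E => 0 < disc G f e ∧ u ∈ Se G f e ∪ Ie G f e), φ e u)
    (hii : ∀ e : E, 0 < disc G f e → ∀ u ∈ Se G f e,
      φ e u ≤ 0 ∧ (φ e u ≠ 0 → g u = (Se G f e).sup' (Se_ne G f e) g))
    (hiii : ∀ e : E, 0 < disc G f e → ∀ u ∈ Ie G f e,
      0 ≤ φ e u ∧ (φ e u ≠ 0 → g u = (Ie G f e).inf' (Ie_ne G f e) g))
    (hiv : ∀ e : E, 0 < disc G f e →
      (∑ u ∈ Se G f e, φ e u = -(G.w e * disc G f e)) ∧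
      (∑ u ∈ Ie G f e, φ e u = G.w e * disc G f e)) :
    ∑ u : V, ω u * (g u) ^ 2
      = -∑ e ∈ Finset.univ.filter (fun e : E => 0 < disc G f e),
          G.w e * disc G f e *
            ((Se G f e).sup' (Se_ne G f e) g - (Ie G f e).inf' (Ie_ne G f e) g) := by
  classical
  have hdisj : ∀ e : E, 0 < disc G f e → Disjoint (Se G f e) (Ie G f e) := by
    intro e he
    rw [Finset.disjoint_left]
    intro u hS hI
    have h1 := (Finset.mem_filter.mp hS).2
    have h2 := (Finset.mem_filter.mp hI).2
    have : disc G f e = 0 := by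
      unfold disc; rw [← h1, ← h2]; ring
    linarith
  have step1 : ∀ u : V, ω u * g u ^ 2 =
      ∑ e ∈ Finset.univ.filter
          (fun e : E => 0 < disc G f e ∧ u ∈ Se G f e ∪ Ie G f e), g u * φ e u := by
    intro u
    have : ω u * g u ^ 2 = g u * (ω u * g u) := by ring
    rw [this, hi u, Finset.mul_sum]
  calc ∑ u : V, ω u * g u ^ 2
      = ∑ u : V, ∑ e ∈ Finset.univ.filter
          (fun e : E => 0 < disc G f e ∧ u ∈ Se G f e ∪ Ie G f e), g u * φ e u := by
        exact Finset.sum_congr rfl fun u _ => step1 u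
    _ = ∑ u : V, ∑ e ∈ Finset.univ.filter (fun e : E => 0 < disc G f e),
          if u ∈ Se G f e ∪ Ie G f e then g u * φ e u else 0 := by
        refine Finset.sum_congr rfl fun u _ => ?_
        rw [Finset.sum_filter]
        rw [Finset.sum_filter]
        refine Finset.sum_congr rfl fun e _ => ?_
        by_cases h1 : 0 < disc G f e <;> by_cases h2 : u ∈ Se G f e ∪ Ie G f e <;>
          simp [h1, h2]
    _ = ∑ e ∈ Finset.univ.filter (fun e : E => 0 < disc G f e),
          ∑ u ∈ Se G f e ∪ Ie G f e, g u * φ e u := by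
        rw [Finset.sum_comm]
        refine Finset.sum_congr rfl fun e _ => ?_
        rw [Finset.sum_ite_mem, Finset.univ_inter]
    _ = _ := by
        rw [← Finset.sum_neg_distrib]
        refine Finset.sum_congr rfl fun e he => ?_
        have hact : 0 < disc G f e := (Finset.mem_filter.mp he).2
        rw [Finset.sum_union (hdisj e hact)]
        have hS : ∑ u ∈ Se G f e, g u * φ e u
            = (Se G f e).sup' (Se_ne G f e) g * ∑ u ∈ Se G f e, φ e u := by
          rw [Finset.mul_sum]
          refine Finset.sum_congr rfl fun u hu => ?_
          by_cases hz : φ e u = 0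
          · simp [hz]
          · rw [(hii e hact u hu).2 hz]
        have hI : ∑ u ∈ Ie G f e, g u * φ e u
            = (Ie G f e).inf' (Ie_ne G f e) g * ∑ u ∈ Ie G f e, φ e u := by
          rw [Finset.mul_sum]
          refine Finset.sum_congr rfl fun u hu => ?_
          by_cases hz : φ e u = 0
          · simp [hz]
          · rw [(hiii e hact u hu).2 hz]
        rw [hS, hI, (hiv e hact).1, (hiv e hact).2]
        ring
end
end
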